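/- arXiv:math/0607585 — 4 statements merged into one kernel-verified Lean document; each statement's English description precedes it below -/
import Mathlib

section
/- Let n ≥ 1, let Ω ⊆ ℝⁿ be a bounded domain whose boundary is of class C^{2,α} for some 0 < α < 1, and let τ ≥ 0. If (λ, φ) is a τ-minimal eigenpair for Ω, or a τ-maximal eigenpair for Ω, then the set {x ∈ Ω : ∇φ(x) = 0} has n-dimensional Lebesgue measure zero. -/
open MeasureTheory Set
open scoped RealInnerProductSpace

noncomputable section

/-- Euclidean space ℝⁿ. -/
abbrev Euc (n : ℕ) := EuclideanSpace ℝ (Fin n)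

/-- The Laplacian of a scalar function on ℝⁿ, as the sum of the second
partial derivatives in the coordinate directions. -/
def lap {n : ℕ} (φ : Euc n → ℝ) (x : Euc n) : ℝ :=
  ∑ i : Fin n,
    iteratedFDeriv ℝ 2 φ x ![EuclideanSpace.single i 1, EuclideanSpace.single i 1]

/-- The unit radial vector field `e_r(x) = x / |x|` (with value `0` at `x = 0`). -/
def eRad {n : ℕ} (x : Euc n) : Euc n := ‖x‖⁻¹ • x

/-- `Ω` is a bounded domain of ℝⁿ whose boundary is of class `C^{2,α}`:
`Ω` is open, connected and bounded, and near each boundary point, `Ω` and its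
boundary are the sublevel and level set of a `C²` defining function with
nonvanishing differential whose second derivative is `α`-Hölder continuous. -/
def IsC2AlphaDomain {n : ℕ} (Ω : Set (Euc n)) (α : ℝ) : Prop :=
  IsOpen Ω ∧ IsConnected Ω ∧ Bornology.IsBounded Ω ∧
  ∀ x ∈ frontier Ω, ∃ (U : Set (Euc n)) (F : Euc n → ℝ),
    IsOpen U ∧ x ∈ U ∧ ContDiffOn ℝ 2 F U ∧
    (∀ y ∈ U, fderivWithin ℝ F U y ≠ 0) ∧
    (U ∩ Ω = U ∩ {y | F y < 0}) ∧
    (U ∩ frontier Ω = U ∩ {y | F y = 0}) ∧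
    ∃ C : ℝ, 0 ≤ C ∧ ∀ y ∈ U, ∀ z ∈ U,
      ‖iteratedFDerivWithin ℝ 2 F U y - iteratedFDerivWithin ℝ 2 F U z‖ ≤ C * ‖y - z‖ ^ α

/-- `(lam, φ)` is a principal eigenpair for `−Δ + v·∇` on `Ω` with Dirichlet
boundary condition: `φ ∈ C¹(cl Ω) ∩ C²(Ω)`, `φ > 0` in `Ω`, `φ = 0` on `∂Ω`,
`sup_Ω φ = 1`, and `−Δφ + v·∇φ = lam φ` almost everywhere in `Ω`. -/
def IsPrincipalEigenpair {n : ℕ} (Ω : Set (Euc n)) (v : Euc n → Euc n)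
    (lam : ℝ) (φ : Euc n → ℝ) : Prop :=
  ContDiffOn ℝ 1 φ (closure Ω) ∧ ContDiffOn ℝ 2 φ Ω ∧
  (∀ x ∈ Ω, 0 < φ x) ∧ (∀ x ∈ frontier Ω, φ x = 0) ∧
  sSup (φ '' Ω) = 1 ∧
  (∀ᵐ x ∂(volume.restrict Ω), -lap φ x + ⟪v x, gradient φ x⟫ = lam * φ x)

/-- `(lam, φ)` is a `τ`-minimal eigenpair for `Ω`: `φ ∈ C²(cl Ω)`, `φ > 0` in `Ω`,
`φ = 0` on `∂Ω`, `sup_Ω φ = 1`, and `−Δφ − τ|∇φ| = lam φ` everywhere in `Ω`. -/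
def IsMinEigenpair {n : ℕ} (Ω : Set (Euc n)) (τ lam : ℝ) (φ : Euc n → ℝ) : Prop :=
  ContDiffOn ℝ 2 φ (closure Ω) ∧
  (∀ x ∈ Ω, 0 < φ x) ∧ (∀ x ∈ frontier Ω, φ x = 0) ∧
  sSup (φ '' Ω) = 1 ∧
  ∀ x ∈ Ω, -lap φ x - τ * ‖gradient φ x‖ = lam * φ x

/-- `(lam, φ)` is a `τ`-maximal eigenpair for `Ω`: `φ ∈ C²(cl Ω)`, `φ > 0` in `Ω`,
`φ = 0` on `∂Ω`, `sup_Ω φ = 1`, and `−Δφ + τ|∇φ| = lam φ` everywhere in `Ω`. -/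
def IsMaxEigenpair {n : ℕ} (Ω : Set (Euc n)) (τ lam : ℝ) (φ : Euc n → ℝ) : Prop :=
  ContDiffOn ℝ 2 φ (closure Ω) ∧
  (∀ x ∈ Ω, 0 < φ x) ∧ (∀ x ∈ frontier Ω, φ x = 0) ∧
  sSup (φ '' Ω) = 1 ∧
  ∀ x ∈ Ω, -lap φ x + τ * ‖gradient φ x‖ = lam * φ x

/-!
Both kinds of eigenpair solve `−Δφ + σ|∇φ| = λφ` with `σ = ∓τ`. The eigenvalue `λ` is positive:
otherwise `Δφ + |σ| |∇φ| ≥ 0` in `Ω`, and the weak maximum principle, proved with the barrier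
`φ + ε e^{k x₁}` for `k = |σ| + 1` (whose Laplacian beats the drift term at every interior
critical point), forces `φ ≤ 0`. At a Lebesgue density point `x` of the critical set `S`, every
direction is tangent to `S`, so the derivative of `∇φ`, which vanishes on `S`, vanishes at `x`.
Then `Δφ(x) = 0` and the equation gives `λ φ(x) = 0`, which is impossible; hence almost no point
of `S` is a density point, i.e. `S` is null.
-/

open Filter Metric
open scoped Topology

theorem IsLocalMax.deriv_deriv_nonpos {g : ℝ → ℝ} {a : ℝ} (h : IsLocalMax g a)
    (hc : ContinuousAt g a) : deriv (deriv g) a ≤ 0 := by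
  by_contra! hpos
  have hconst : g =ᶠ[𝓝 a] fun _ => g a :=
    (h.and (isLocalMin_of_deriv_deriv_pos hpos h.deriv_eq_zero hc)).mono
      fun _ hx => le_antisymm hx.1 hx.2
  simp [hconst.deriv.deriv_eq] at hpos

section

variable {E : Type*} [NormedAddCommGroup E] [NormedSpace ℝ E]

theorem hasDerivAt_comp_line {F : Type*} [NormedAddCommGroup F] [NormedSpace ℝ F] {f : E → F}
    {x v : E} {t : ℝ} (hf : DifferentiableAt ℝ f (x + t • v)) :
    HasDerivAt (fun s : ℝ => f (x + s • v)) (fderiv ℝ f (x + t • v) v) t :=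
  hf.hasFDerivAt.comp_hasDerivAt t (by simpa using ((hasDerivAt_id t).smul_const v).const_add x)

theorem IsLocalMax.iteratedFDeriv_two_self_nonpos {f : E → ℝ} {x : E} (h : IsLocalMax f x)
    (hf : ContDiffAt ℝ 2 f x) (v : E) : iteratedFDeriv ℝ 2 f x ![v, v] ≤ 0 := by
  set g : ℝ → ℝ := fun t => f (x + t • v)
  have hline : Tendsto (fun t : ℝ => x + t • v) (𝓝 0) (𝓝 x) := by
    have : Continuous fun t : ℝ => x + t • v := by fun_prop
    simpa using this.tendsto 0
  have hmax : IsLocalMax g 0 := by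
    simpa [IsLocalMax, IsMaxFilter, g] using hline.eventually h
  have hg' : deriv g =ᶠ[𝓝 0] fun t => fderiv ℝ f (x + t • v) v := by
    filter_upwards [hline.eventually (hf.eventually (by decide))] with t ht
    exact (hasDerivAt_comp_line (ht.differentiableAt two_ne_zero)).deriv
  have hg'' :
      HasDerivAt (fun t : ℝ => fderiv ℝ f (x + t • v) v) (fderiv ℝ (fderiv ℝ f) x v v) 0 := by
    have hd : DifferentiableAt ℝ (fderiv ℝ f) (x + (0 : ℝ) • v) := by
      simpa using (hf.fderiv_right (m := 1) le_rfl).differentiableAt one_ne_zero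
    simpa [Function.comp_def] using
      (ContinuousLinearMap.apply ℝ ℝ v).hasFDerivAt.comp_hasDerivAt 0 (hasDerivAt_comp_line hd)
  rw [iteratedFDeriv_two_apply]
  simpa [hg'.deriv_eq, hg''.deriv] using
    hmax.deriv_deriv_nonpos <| by
      simpa [ContinuousAt, g, Function.comp_def] using hf.continuousAt.tendsto.comp hline

end

theorem norm_gradient_eq_norm_fderiv {F : Type*} [NormedAddCommGroup F] [InnerProductSpace ℝ F]
    [CompleteSpace F] (f : F → ℝ) (x : F) : ‖gradient f x‖ = ‖fderiv ℝ f x‖ := by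
  simp [gradient]

section DensityPoints

variable {E : Type*} [NormedAddCommGroup E] [NormedSpace ℝ E] [FiniteDimensional ℝ E]
  [MeasurableSpace E] [BorelSpace E] (μ : Measure E) [μ.IsAddHaarMeasure]

theorem tangentConeAt_eq_univ_of_density_one {s : Set E} {x : E}
    (h : Tendsto (fun r => μ (s ∩ closedBall x r) / μ (closedBall x r)) (𝓝[>] 0) (𝓝 1)) :
    tangentConeAt ℝ s x = univ := by
  refine eq_univ_of_forall fun y => ?_
  rw [Metric.nhds_basis_ball.tangentConeAt_eq_biInter_closure]
  refine mem_iInter₂.2 fun δ hδ => Metric.mem_closure_iff.2 fun ε hε => ?_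
  have hsmall : ∀ᶠ r in 𝓝[>] (0 : ℝ), r * (‖y‖ + ε) < δ := by
    have : Tendsto (fun r : ℝ => r * (‖y‖ + ε)) (𝓝 0) (𝓝 0) :=
      (continuous_mul_const _).tendsto' 0 0 (zero_mul _)
    exact nhdsWithin_le_nhds (this.eventually (gt_mem_nhds hδ))
  have hmeets := Measure.eventually_nonempty_inter_smul_of_density_one μ s x h
    (ball y ε) measurableSet_ball (measure_ball_pos μ y hε).ne'
  obtain ⟨r, ⟨w, hws, hw⟩, hrδ, hr⟩ := (hmeets.and (hsmall.and self_mem_nhdsWithin)).exists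
  obtain ⟨z, hz, hzw⟩ : ∃ z, dist z y < ε ∧ r • z = -x + w := by
    simpa [Set.mem_add, Set.mem_smul_set] using hw
  obtain rfl : w = x + r • z := by rw [hzw]; abel
  refine ⟨r⁻¹ • (r • z), ⟨r⁻¹, mem_univ _, r • z, ⟨?_, by simpa using hws⟩, rfl⟩, ?_⟩
  · rw [mem_ball_zero_iff, norm_smul, Real.norm_of_nonneg hr.le]
    exact (mul_le_mul_of_nonneg_left (norm_lt_of_mem_ball hz).le hr.le).trans_lt hrδ
  · rw [smul_smul, inv_mul_cancel₀ (ne_of_gt hr), one_smul, dist_comm]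
    exact hz

theorem uniqueDiffWithinAt_of_density_one {s : Set E} {x : E}
    (h : Tendsto (fun r => μ (s ∩ closedBall x r) / μ (closedBall x r)) (𝓝[>] 0) (𝓝 1)) :
    UniqueDiffWithinAt ℝ s x := by
  have hT := tangentConeAt_eq_univ_of_density_one μ h
  exact ⟨by simp [hT, dense_univ], mem_closure_of_nonempty_tangentConeAt (hT ▸ univ_nonempty)⟩

theorem ae_restrict_fderiv_eq_zero_of_eqOn_zero {F : Type*} [NormedAddCommGroup F]
    [NormedSpace ℝ F] {G : E → F} {s : Set E} (hs : MeasurableSet s) (hG : EqOn G 0 s) :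
    ∀ᵐ x ∂μ.restrict s, fderiv ℝ G x = 0 := by
  filter_upwards [Besicovitch.ae_tendsto_measure_inter_div μ s, ae_restrict_mem hs]
    with x hx hxs
  by_cases hd : DifferentiableAt ℝ G x
  · exact (uniqueDiffWithinAt_of_density_one μ hx).eq hd.hasFDerivAt.hasFDerivWithinAt
      ((hasFDerivWithinAt_const 0 x s).congr hG (hG hxs))
  · exact fderiv_zero_of_not_differentiableAt hd

end DensityPoints

section Laplacian

variable {n : ℕ}

theorem IsLocalMax.lap_nonpos {f : Euc n → ℝ} {x : Euc n} (h : IsLocalMax f x)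
    (hf : ContDiffAt ℝ 2 f x) : lap f x ≤ 0 :=
  Finset.sum_nonpos fun _ _ => h.iteratedFDeriv_two_self_nonpos hf _

theorem lap_add_const_mul {f g : Euc n → ℝ} {x : Euc n} (hf : ContDiffAt ℝ 2 f x)
    (hg : ContDiffAt ℝ 2 g x) (c : ℝ) :
    lap (fun y => f y + c * g y) x = lap f x + c * lap g x := by
  have h : iteratedFDeriv ℝ 2 (fun y => f y + c * g y) x =
      iteratedFDeriv ℝ 2 f x + c • iteratedFDeriv ℝ 2 g x := by
    rw [← iteratedFDeriv_const_smul_apply' (i := 2) hg]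
    exact fun_iteratedFDeriv_add_apply hf (hg.const_smul c)
  simp [lap, h, Finset.mul_sum, Finset.sum_add_distrib]

theorem lap_exp_mul_apply (i : Fin n) (k : ℝ) (x : Euc n) :
    lap (fun y => Real.exp (k * y i)) x = k ^ 2 * Real.exp (k * x i) := by
  let ℓ : Euc n →L[ℝ] ℝ := EuclideanSpace.proj i
  have h (v : Euc n) : iteratedFDeriv ℝ 2 (fun y : Euc n => Real.exp (k * y i)) x ![v, v] =
      v i ^ 2 * (k ^ 2 * Real.exp (k * x i)) := by
    have hcomp : (fun y : Euc n => Real.exp (k * y i)) = (fun s => Real.exp (k * s)) ∘ ℓ := rfl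
    rw [hcomp, ℓ.iteratedFDeriv_comp_right (by fun_prop : ContDiff ℝ 2 _) _ le_rfl]
    simp [iteratedFDeriv_apply_eq_iteratedDeriv_mul_prod, ℓ, sq]
  simp [lap, h]

theorem norm_fderiv_exp_mul_apply_le (i : Fin n) (k : ℝ) (x : Euc n) :
    ‖fderiv ℝ (fun y : Euc n => Real.exp (k * y i)) x‖ ≤ |k| * Real.exp (k * x i) := by
  have h : HasFDerivAt (fun y : Euc n => Real.exp (k * y i))
      (Real.exp (k * x i) • k • EuclideanSpace.proj (𝕜 := ℝ) i) x :=
    ((EuclideanSpace.proj i).hasFDerivAt.const_mul k).exp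
  rw [h.fderiv]
  refine ContinuousLinearMap.opNorm_le_bound _ (by positivity) fun y => ?_
  have hy : |y i| ≤ ‖y‖ := PiLp.norm_apply_le y i
  simp only [smul_apply, smul_eq_mul, norm_mul, Real.norm_eq_abs, abs_of_pos (Real.exp_pos _)]
  calc Real.exp (k * x i) * (|k| * |y i|) ≤ Real.exp (k * x i) * (|k| * ‖y‖) := by gcongr
    _ = |k| * Real.exp (k * x i) * ‖y‖ := by ring

end Laplacian

section MaximumPrinciple

variable {n : ℕ} {Ω : Set (Euc n)}

theorem exists_mem_frontier_le_of_lap_pos (hΩo : IsOpen Ω) (hΩb : Bornology.IsBounded Ω)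
    {u : Euc n → ℝ} (huc : ContinuousOn u (closure Ω)) (hu : ContDiffOn ℝ 2 u Ω)
    (hlap : ∀ x ∈ Ω, fderiv ℝ u x = 0 → 0 < lap u x) {x : Euc n} (hx : x ∈ Ω) :
    ∃ y ∈ frontier Ω, u x ≤ u y := by
  obtain ⟨y, hy, hmax⟩ := hΩb.isCompact_closure.exists_isMaxOn ⟨x, subset_closure hx⟩ huc
  have hyΩ : y ∉ Ω := fun hyΩ => by
    have hloc : IsLocalMax u y :=
      hmax.isLocalMax (mem_of_superset (hΩo.mem_nhds hyΩ) subset_closure)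
    exact (hlap y hyΩ hloc.fderiv_eq_zero).not_ge
      (hloc.lap_nonpos (hu.contDiffAt (hΩo.mem_nhds hyΩ)))
  exact ⟨y, hΩo.frontier_eq ▸ ⟨hy, hyΩ⟩, hmax (subset_closure hx)⟩

theorem lap_add_exp_mul_pos_of_fderiv_eq_zero {C ε : ℝ} (hC : 0 ≤ C) (hε : 0 < ε) (i : Fin n)
    {φ : Euc n → ℝ} {z : Euc n} (hφ : ContDiffAt ℝ 2 φ z)
    (hsub : 0 ≤ lap φ z + C * ‖gradient φ z‖)
    (hcrit : fderiv ℝ (fun y => φ y + ε * Real.exp ((C + 1) * y i)) z = 0) :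
    0 < lap (fun y => φ y + ε * Real.exp ((C + 1) * y i)) z := by
  set k := C + 1
  set w : Euc n → ℝ := fun y => Real.exp (k * y i)
  have hw : ContDiff ℝ 2 w := by fun_prop
  have hgrad : ‖gradient φ z‖ ≤ ε * (k * w z) := by
    have hdφ : fderiv ℝ φ z = -(ε • fderiv ℝ w z) := by
      rw [fderiv_fun_add (hφ.differentiableAt two_ne_zero)
        ((hw.differentiable two_ne_zero).const_mul ε z),
        fderiv_const_mul (hw.differentiable two_ne_zero z)] at hcrit
      exact eq_neg_of_add_eq_zero_left hcrit
    rw [norm_gradient_eq_norm_fderiv, hdφ, norm_neg, norm_smul, Real.norm_of_nonneg hε.le]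
    have := norm_fderiv_exp_mul_apply_le i k z
    rw [abs_of_pos (by positivity : 0 < k)] at this
    gcongr
  have hεkw : 0 < ε * (k * w z) := by positivity
  have hk : ε * (k ^ 2 * w z) - C * (ε * (k * w z)) = ε * (k * w z) := by ring
  rw [lap_add_const_mul hφ hw.contDiffAt, lap_exp_mul_apply]
  change 0 < lap φ z + ε * (k ^ 2 * w z)
  linarith [mul_le_mul_of_nonneg_left hgrad hC]

theorem weak_maximum_principle (hn : 1 ≤ n) (hΩo : IsOpen Ω) (hΩb : Bornology.IsBounded Ω)
    {C : ℝ} (hC : 0 ≤ C) {φ : Euc n → ℝ} (hφc : ContinuousOn φ (closure Ω))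
    (hφ : ContDiffOn ℝ 2 φ Ω) (hbd : ∀ x ∈ frontier Ω, φ x ≤ 0)
    (hsub : ∀ x ∈ Ω, 0 ≤ lap φ x + C * ‖gradient φ x‖) {x : Euc n} (hx : x ∈ Ω) :
    φ x ≤ 0 := by
  let i : Fin n := ⟨0, hn⟩
  set w : Euc n → ℝ := fun y => Real.exp ((C + 1) * y i)
  have hw : Continuous w := by fun_prop
  obtain ⟨M, hM⟩ := hΩb.isCompact_closure.bddAbove_image hw.continuousOn
  have hle : ∀ ε > 0, φ x ≤ ε * M := by
    intro ε hε
    obtain ⟨y, hy, hxy⟩ := exists_mem_frontier_le_of_lap_pos hΩo hΩb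
      (u := fun y => φ y + ε * w y) (hφc.add (continuous_const.mul hw).continuousOn)
      (hφ.add (contDiffOn_const.mul (by fun_prop))) (fun z hz hcrit =>
        lap_add_exp_mul_pos_of_fderiv_eq_zero hC hε i (hφ.contDiffAt (hΩo.mem_nhds hz))
          (hsub z hz) hcrit) hx
    have hwy := hM (mem_image_of_mem w (frontier_subset_closure hy))
    have hwx : 0 < ε * w x := mul_pos hε (Real.exp_pos _)
    linarith [hbd y hy, mul_le_mul_of_nonneg_left hwy hε.le]
  have hM_pos : 0 < M := (Real.exp_pos _).trans_le (hM (mem_image_of_mem w (subset_closure hx)))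
  refine le_of_forall_pos_le_add fun δ hδ => ?_
  simpa [div_mul_cancel₀ δ hM_pos.ne'] using hle (δ / M) (by positivity)

theorem eigenvalue_pos (hn : 1 ≤ n) (hΩo : IsOpen Ω) (hΩne : Ω.Nonempty)
    (hΩb : Bornology.IsBounded Ω) {σ lam : ℝ} {φ : Euc n → ℝ}
    (hφ : ContDiffOn ℝ 2 φ (closure Ω)) (hpos : ∀ x ∈ Ω, 0 < φ x)
    (hbd : ∀ x ∈ frontier Ω, φ x = 0)
    (heq : ∀ x ∈ Ω, -lap φ x + σ * ‖gradient φ x‖ = lam * φ x) : 0 < lam := by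
  by_contra! hlam
  obtain ⟨x, hx⟩ := hΩne
  have hsub : ∀ y ∈ Ω, 0 ≤ lap φ y + |σ| * ‖gradient φ y‖ := fun y hy => by
    nlinarith [heq y hy, hpos y hy, neg_abs_le σ, norm_nonneg (gradient φ y)]
  have := weak_maximum_principle hn hΩo hΩb (abs_nonneg σ) hφ.continuousOn
    (hφ.mono subset_closure) (fun y hy => (hbd y hy).le) hsub hx
  linarith [hpos x hx]

end MaximumPrinciple

theorem volume_critical_set_eq_zero {n : ℕ} (hn : 1 ≤ n) {Ω : Set (Euc n)} (hΩo : IsOpen Ω)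
    (hΩne : Ω.Nonempty) (hΩb : Bornology.IsBounded Ω) {σ lam : ℝ} {φ : Euc n → ℝ}
    (hφ : ContDiffOn ℝ 2 φ (closure Ω)) (hpos : ∀ x ∈ Ω, 0 < φ x)
    (hbd : ∀ x ∈ frontier Ω, φ x = 0)
    (heq : ∀ x ∈ Ω, -lap φ x + σ * ‖gradient φ x‖ = lam * φ x) :
    volume {x ∈ Ω | gradient φ x = 0} = 0 := by
  have hlam := eigenvalue_pos hn hΩo hΩne hΩb hφ hpos hbd heq
  set S := {x ∈ Ω | gradient φ x = 0}
  have hS : MeasurableSet S := hΩo.measurableSet.inter <|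
    ((InnerProductSpace.toDual ℝ _).symm.continuous.measurable.comp
      (measurable_fderiv ℝ φ)) (measurableSet_singleton 0)
  have hcrit : EqOn (fderiv ℝ φ) 0 S := fun x hx => by simpa [gradient] using hx.2
  have hae : ∀ᵐ x ∂volume.restrict S, False := by
    filter_upwards [ae_restrict_fderiv_eq_zero_of_eqOn_zero volume hS hcrit, ae_restrict_mem hS]
      with x hx hxS
    have hlap : lap φ x = 0 := by simp [lap, iteratedFDeriv_two_apply, hx]
    have := heq x hxS.1
    rw [hlap, hxS.2] at this
    exact (mul_pos hlam (hpos x hxS.1)).ne' (by simpa using this.symm)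
  exact Measure.restrict_eq_zero.1 (ae_eq_bot.1 (eventually_false_iff_eq_bot.1 hae))

theorem critical_set_null_general {n : ℕ} (hn : 1 ≤ n)
    (Ω : Set (Euc n)) (α : ℝ)
    (hΩ : IsC2AlphaDomain Ω α) (τ : ℝ)
    (lam : ℝ) (φ : Euc n → ℝ)
    (hpair : IsMinEigenpair Ω τ lam φ ∨ IsMaxEigenpair Ω τ lam φ) :
    volume {x ∈ Ω | gradient φ x = 0} = 0 := by
  obtain ⟨hΩo, hΩc, hΩb, -⟩ := hΩ
  rcases hpair with ⟨hφ, hpos, hbd, -, heq⟩ | ⟨hφ, hpos, hbd, -, heq⟩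
  · refine volume_critical_set_eq_zero hn hΩo hΩc.nonempty hΩb hφ hpos hbd
      (σ := -τ) (lam := lam) ?_
    simpa [neg_mul, ← sub_eq_add_neg] using heq
  · exact volume_critical_set_eq_zero hn hΩo hΩc.nonempty hΩb hφ hpos hbd heq

/-- The critical set of a `τ`-minimal or `τ`-maximal eigenfunction has
Lebesgue measure zero. -/
theorem critical_set_null {n : ℕ} (hn : 1 ≤ n)
    (Ω : Set (Euc n)) (α : ℝ) (hα₀ : 0 < α) (hα₁ : α < 1)
    (hΩ : IsC2AlphaDomain Ω α) (τ : ℝ) (hτ : 0 ≤ τ)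
    (lam : ℝ) (φ : Euc n → ℝ)
    (hpair : IsMinEigenpair Ω τ lam φ ∨ IsMaxEigenpair Ω τ lam φ) :
    volume {x ∈ Ω | gradient φ x = 0} = 0 :=
  critical_set_null_general hn Ω α hΩ τ lam φ hpair
end
end

section
/- Let n ≥ 1, let Ω ⊆ ℝⁿ be a bounded domain whose boundary is of class C^{2,α} for some 0 < α < 1, let f : cl Ω → ℝ be continuous with f > 0 on cl Ω, and let φ ∈ C²(cl Ω) satisfy −Δφ = f in Ω, φ > 0 in Ω, and φ = 0 on ∂Ω. Set M = max_{cl Ω} φ, R = (|Ω|/α_n)^{1/n}, and for a ∈ [0,M] set ρ(a) = (|{x ∈ Ω : φ(x) > a}|/α_n)^{1/n}. Then: (i) for every a ∈ (0,M], the level set {x ∈ Ω : φ(x) = a} has n-dimensional Lebesgue measure zero; (ii) ρ is a continuous, strictly decreasing bijection from [0,M] onto [0,R], with ρ(0) = R and ρ(M) = 0. -/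
open MeasureTheory Set
open scoped RealInnerProductSpace

noncomputable section

/-!
Along a line, a function that is constant on a set `A` has zero derivative at every
non-isolated point of `A`, and the isolated points of `A` are countable. By Fubini, a
differentiable function that is constant on a measurable set `S` therefore has all directional
derivatives zero almost everywhere on `S`. Applied to `φ` on `{φ = a}` and then to `∂ᵢφ` on
`{∂ᵢφ = 0}`, this makes every `∂ᵢ²φ` vanish almost everywhere on the level set, which
`Δφ = -f < 0` forbids. So the distribution function `t ↦ |{φ > t}|` has no jumps; it is strictly
decreasing on `[0, M]` because `φ` takes every value of `(0, M)` on the open set `Ω`, and `ρ` is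
an increasing continuous function of it.
-/

open Filter
open scoped ENNReal

theorem countable_setOf_hasDerivAt_ne_zero_of_eqOn {F : Type*} [NormedAddCommGroup F]
    [NormedSpace ℝ F] {A : Set ℝ} {h d : ℝ → F} {c : F} (hc : ∀ t ∈ A, h t = c)
    (hd : ∀ t ∈ A, HasDerivAt h (d t) t) : {t ∈ A | d t ≠ 0}.Countable := by
  refine (HereditarilyLindelofSpace.isLindelof _).countable_of_isDiscrete
    (isDiscrete_iff_nhdsNE.2 fun t ht => ?_)
  rw [inf_principal_eq_bot]
  filter_upwards [(hd t ht.1).eventually_ne ht.2 (c := c)] with s hs hsA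
  exact hs (hc s hsA.1)

theorem ae_fderiv_apply_eq_zero_of_eqOn {E F : Type*} [NormedAddCommGroup E] [NormedSpace ℝ E]
    [FiniteDimensional ℝ E] [MeasurableSpace E] [BorelSpace E] [NormedAddCommGroup F]
    [NormedSpace ℝ F] [CompleteSpace F] [MeasurableSpace F] [BorelSpace F]
    (μ : Measure E) [μ.IsAddHaarMeasure] {g : E → F} {S : Set E} {c : F}
    (hS : MeasurableSet S) (hc : ∀ x ∈ S, g x = c) (hg : ∀ x ∈ S, DifferentiableAt ℝ g x)
    (v : E) : ∀ᵐ x ∂μ, x ∈ S → fderiv ℝ g x v = 0 := by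
  let L : ℝ →ₗ[ℝ] E := LinearMap.smulRight LinearMap.id v
  suffices ∀ᵐ x ∂μ, x ∈ Sᶜ ∪ {x | fderiv ℝ g x v = 0} from
    this.mono fun x hx hxS => hx.resolve_left (not_not_intro hxS)
  refine ae_mem_of_ae_add_linearMap_mem L volume μ
    (hS.compl.union (measurable_fderiv_apply_const ℝ g v (measurableSet_singleton 0)))
    fun y => ?_
  have hline : ∀ t, y + t • v ∈ S →
      HasDerivAt (fun s => g (y + s • v)) (fderiv ℝ g (y + t • v) v) t := fun t ht =>
    (hg _ ht).hasFDerivAt.comp_hasDerivAt t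
      (by simpa using ((hasDerivAt_id t).smul_const v).const_add y)
  have hbad := countable_setOf_hasDerivAt_ne_zero_of_eqOn (A := {t | y + t • v ∈ S})
    (fun t ht => hc _ ht) hline
  refine measure_mono_null (fun t ht => ?_) (hbad.measure_zero volume)
  simp only [L, LinearMap.smulRight_apply, LinearMap.id_apply] at ht
  simpa using ht

theorem ae_iteratedFDeriv_two_eq_zero_of_mem_levelSet {E : Type*} [NormedAddCommGroup E]
    [NormedSpace ℝ E] [FiniteDimensional ℝ E] [MeasurableSpace E] [BorelSpace E]
    (μ : Measure E) [μ.IsAddHaarMeasure] {Ω : Set E} (hΩ : IsOpen Ω) {φ : E → ℝ}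
    (hφ : ContDiffOn ℝ 2 φ Ω) (a : ℝ) (v : E) :
    ∀ᵐ x ∂μ, x ∈ Ω → φ x = a → iteratedFDeriv ℝ 2 φ x ![v, v] = 0 := by
  have hφ2 : ∀ x ∈ Ω, ContDiffAt ℝ 2 φ x := fun x hx => hφ.contDiffAt (hΩ.mem_nhds hx)
  have hdφ : ∀ x ∈ Ω, DifferentiableAt ℝ (fderiv ℝ φ) x := fun x hx =>
    ((hφ2 x hx).fderiv_right (m := 1) le_rfl).differentiableAt one_ne_zero
  set g : E → ℝ := fun x => fderiv ℝ φ x v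
  have hg : ∀ x ∈ Ω, fderiv ℝ g x v = iteratedFDeriv ℝ 2 φ x ![v, v] := fun x hx => by
    simp [g, iteratedFDeriv_two_apply, fderiv_clm_apply (hdφ x hx) (differentiableAt_const v)]
  have hlevel : MeasurableSet {x ∈ Ω | φ x = a} := by
    obtain ⟨u, hu, hEu⟩ := continuousOn_iff_isClosed.1 hφ.continuousOn {a} isClosed_singleton
    rw [show {x ∈ Ω | φ x = a} = u ∩ Ω by rw [← hEu, Set.inter_comm]; rfl]
    exact hu.measurableSet.inter hΩ.measurableSet
  have hcrit := ae_fderiv_apply_eq_zero_of_eqOn μ hlevel (fun x hx => hx.2)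
    (fun x hx => (hφ2 x hx.1).differentiableAt two_ne_zero) v
  have hsecond := ae_fderiv_apply_eq_zero_of_eqOn μ
    (hΩ.measurableSet.inter (measurable_fderiv_apply_const ℝ φ v (measurableSet_singleton 0)))
    (c := 0) (fun x hx => hx.2)
    (fun x hx => ((ContinuousLinearMap.apply ℝ ℝ v).differentiableAt).comp x (hdφ x hx.1)) v
  filter_upwards [hcrit, hsecond] with x hx₁ hx₂ hxΩ hxa
  rw [← hg x hxΩ]
  exact hx₂ ⟨hxΩ, hx₁ ⟨hxΩ, hxa⟩⟩

theorem volume_levelSet_eq_zero_of_lap_ne_zero {n : ℕ} {Ω : Set (Euc n)} (hΩ : IsOpen Ω)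
    {φ : Euc n → ℝ} (hφ : ContDiffOn ℝ 2 φ Ω) (hlap : ∀ x ∈ Ω, lap φ x ≠ 0) (a : ℝ) :
    volume {x ∈ Ω | φ x = a} = 0 := by
  rw [measure_eq_zero_iff_ae_notMem]
  filter_upwards [ae_all_iff.2 fun i : Fin n => ae_iteratedFDeriv_two_eq_zero_of_mem_levelSet
    volume hΩ hφ a (EuclideanSpace.single i 1)] with x hx ⟨hxΩ, hxa⟩
  exact hlap x hxΩ (Finset.sum_eq_zero fun i _ => hx i hxΩ hxa)

theorem Ioo_subset_image_of_eq_zero_on_frontier {E : Type*} [NormedAddCommGroup E]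
    [NormedSpace ℝ E] [Nontrivial E] {Ω : Set E} (hΩc : IsConnected Ω)
    (hΩb : Bornology.IsBounded Ω) {φ : E → ℝ} (hφ : ContinuousOn φ (closure Ω))
    (hφ0 : ∀ x ∈ frontier Ω, φ x = 0) {M : ℝ} (hM : M ∈ φ '' closure Ω) :
    Ioo 0 M ⊆ φ '' Ω := by
  obtain ⟨z, hz⟩ : (frontier Ω).Nonempty :=
    nonempty_frontier_iff.2 ⟨hΩc.nonempty, fun h => NormedSpace.unbounded_univ ℝ E (h ▸ hΩb)⟩
  obtain ⟨w, hw, rfl⟩ := hM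
  intro c hc
  obtain ⟨x, hx, rfl⟩ := hΩc.closure.isPreconnected.intermediate_value
    (frontier_subset_closure hz) hw hφ ⟨(hφ0 z hz).symm ▸ hc.1.le, hc.2.le⟩
  exact ⟨x, by_contra fun hxΩ => hc.1.ne' (hφ0 x ⟨hx, fun hxi => hxΩ (interior_subset hxi)⟩), rfl⟩

section DistributionFunction

variable {X : Type*} [TopologicalSpace X] [MeasurableSpace X] [OpensMeasurableSpace X]
  (μ : Measure X) {Ω : Set X} {φ : X → ℝ}

theorem strictAntiOn_measure_setOf_lt [μ.IsOpenPosMeasure] (hΩ : IsOpen Ω) (hΩμ : μ Ω ≠ ∞)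
    (hφ : ContinuousOn φ Ω) {m M : ℝ} (hrange : Ioo m M ⊆ φ '' Ω) :
    StrictAntiOn (fun t => μ {x ∈ Ω | t < φ x}) (Icc m M) := by
  intro a ha b hb hab
  obtain ⟨x, hx, hxc⟩ : (a + b) / 2 ∈ φ '' Ω :=
    hrange ⟨by linarith [ha.1], by linarith [hb.2]⟩
  have hD : IsOpen (Ω ∩ φ ⁻¹' Ioo a b) := hφ.isOpen_inter_preimage hΩ isOpen_Ioo
  have hDpos : 0 < μ (Ω ∩ φ ⁻¹' Ioo a b) :=
    hD.measure_pos μ ⟨x, hx, by simp only [mem_preimage, mem_Ioo, hxc]; constructor <;> linarith⟩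
  calc μ {x ∈ Ω | b < φ x}
      < μ {x ∈ Ω | b < φ x} + μ (Ω ∩ φ ⁻¹' Ioo a b) :=
        ENNReal.lt_add_right (ne_top_of_le_ne_top hΩμ (measure_mono (sep_subset _ _))) hDpos.ne'
    _ = μ ({x ∈ Ω | b < φ x} ∪ Ω ∩ φ ⁻¹' Ioo a b) :=
        (measure_union (disjoint_left.2 fun y hy hy' => hy'.2.2.not_gt hy.2) hD.measurableSet).symm
    _ ≤ μ {x ∈ Ω | a < φ x} :=
        measure_mono (union_subset (fun y hy => ⟨hy.1, hab.trans hy.2⟩) fun y hy => ⟨hy.1, hy.2.1⟩)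

theorem continuousAt_measure_setOf_lt (hΩ : IsOpen Ω) (hΩμ : μ Ω ≠ ∞)
    (hφ : ContinuousOn φ Ω) {a : ℝ} (ha : μ {x ∈ Ω | φ x = a} = 0) :
    ContinuousAt (fun t => μ {x ∈ Ω | t < φ x}) a := by
  have hmeas : ∀ t, MeasurableSet {x ∈ Ω | t < φ x} := fun t =>
    (hφ.isOpen_inter_preimage hΩ isOpen_Ioi).measurableSet
  refine tendsto_measure_of_ae_tendsto_indicator _ (hmeas a) hmeas hΩ.measurableSet hΩμ
    (Eventually.of_forall fun t => sep_subset _ _) ?_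
  filter_upwards [measure_eq_zero_iff_ae_notMem.1 ha] with x hx
  by_cases hxΩ : x ∈ Ω
  · rcases lt_or_gt_of_ne fun h => hx ⟨hxΩ, h⟩ with h | h
    · filter_upwards [eventually_gt_nhds h] with t ht
      simp [hxΩ, ht.le.not_gt, h.le.not_gt]
    · filter_upwards [eventually_lt_nhds h] with t ht
      simp [hxΩ, h, ht]
  · exact Eventually.of_forall fun t => by simp [hxΩ]

end DistributionFunction

theorem strictMonoOn_toReal_div_rpow {κ p : ℝ} (hκ : 0 < κ) (hp : 0 < p) :
    StrictMonoOn (fun y : ℝ≥0∞ => (y.toReal / κ) ^ p) {∞}ᶜ := fun y hy z hz hyz =>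
  Real.rpow_lt_rpow (by positivity)
    (div_lt_div_of_pos_right ((ENNReal.toReal_lt_toReal hy hz).2 hyz) hκ) hp

theorem continuousOn_toReal_div_rpow {κ p : ℝ} (hp : 0 ≤ p) :
    ContinuousOn (fun y : ℝ≥0∞ => (y.toReal / κ) ^ p) {∞}ᶜ := fun _ hy =>
  ((Real.continuousAt_rpow_const _ p (Or.inr hp)).comp
    ((ENNReal.continuousAt_toReal hy).div_const κ)).continuousWithinAt

theorem level_set_null_and_rho_bijective_general {n : ℕ} (hn : 1 ≤ n)
    (Ω : Set (Euc n)) (α : ℝ)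
    (hΩ : IsC2AlphaDomain Ω α)
    (f : Euc n → ℝ)
    (hfpos : ∀ x ∈ closure Ω, 0 < f x)
    (φ : Euc n → ℝ) (hφ : ContDiffOn ℝ 2 φ (closure Ω))
    (heq : ∀ x ∈ Ω, -lap φ x = f x)
    (hφpos : ∀ x ∈ Ω, 0 < φ x) (hφ0 : ∀ x ∈ frontier Ω, φ x = 0)
    (M : ℝ) (hM : IsGreatest (φ '' closure Ω) M)
    (R : ℝ) (hR : R = ((volume Ω).toReal
      / (volume (Metric.ball (0 : Euc n) 1)).toReal) ^ ((1 : ℝ) / n))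
    (ρ : ℝ → ℝ)
    (hρ : ∀ a, ρ a = ((volume {x ∈ Ω | a < φ x}).toReal
      / (volume (Metric.ball (0 : Euc n) 1)).toReal) ^ ((1 : ℝ) / n)) :
    (∀ a ∈ Set.Ioc 0 M, volume {x ∈ Ω | φ x = a} = 0) ∧
    ContinuousOn ρ (Set.Icc 0 M) ∧
    StrictAntiOn ρ (Set.Icc 0 M) ∧
    Set.BijOn ρ (Set.Icc 0 M) (Set.Icc 0 R) ∧
    ρ 0 = R ∧ ρ M = 0 := by
  obtain ⟨hΩo, hΩc, hΩb, -⟩ := hΩ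
  have : Nonempty (Fin n) := ⟨⟨0, hn⟩⟩
  have hp : 0 < (1 : ℝ) / n := one_div_pos.2 (Nat.cast_pos.2 hn)
  have hκ : 0 < (volume (Metric.ball (0 : Euc n) 1)).toReal :=
    ENNReal.toReal_pos (Metric.measure_ball_pos volume 0 one_pos).ne' measure_ball_lt_top.ne
  have hφΩ : ContinuousOn φ Ω := hφ.continuousOn.mono subset_closure
  have hlevel : ∀ a, volume {x ∈ Ω | φ x = a} = 0 :=
    volume_levelSet_eq_zero_of_lap_ne_zero hΩo (hφ.mono subset_closure) fun x hx => by
      linarith [heq x hx, hfpos x (subset_closure hx)]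
  have hfin : ∀ t, volume {x ∈ Ω | t < φ x} ≠ ∞ := fun t =>
    ne_top_of_le_ne_top hΩb.measure_lt_top.ne (measure_mono (sep_subset _ _))
  have hρ' : ρ = (fun y : ℝ≥0∞ => (y.toReal / (volume (Metric.ball (0 : Euc n) 1)).toReal)
      ^ ((1 : ℝ) / n)) ∘ fun t => volume {x ∈ Ω | t < φ x} := funext hρ
  have hanti : StrictAntiOn ρ (Icc 0 M) := hρ' ▸
    (strictMonoOn_toReal_div_rpow hκ hp).comp_strictAntiOn
      (strictAntiOn_measure_setOf_lt volume hΩo hΩb.measure_lt_top.ne hφΩ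
        (Ioo_subset_image_of_eq_zero_on_frontier hΩc hΩb hφ.continuousOn hφ0 hM.1))
      fun t _ => hfin t
  have hcont : ContinuousOn ρ (Icc 0 M) := hρ' ▸
    (continuousOn_toReal_div_rpow hp.le).comp
      (fun t _ => (continuousAt_measure_setOf_lt volume hΩo hΩb.measure_lt_top.ne hφΩ
        (hlevel t)).continuousWithinAt)
      fun t _ => hfin t
  have hρ0 : ρ 0 = R := by rw [hρ, hR, sep_eq_self_iff_mem_true.2 hφpos]
  have hρM : ρ M = 0 := by
    rw [hρ, sep_eq_empty_iff_mem_false.2 fun x hx => (hM.2 ⟨x, subset_closure hx, rfl⟩).not_gt,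
      measure_empty, ENNReal.toReal_zero, zero_div, Real.zero_rpow hp.ne']
  obtain ⟨x₀, hx₀⟩ := hΩc.nonempty
  have hM0 : 0 ≤ M := (hφpos x₀ hx₀).le.trans (hM.2 ⟨x₀, subset_closure hx₀, rfl⟩)
  refine ⟨fun a _ => hlevel a, hcont, hanti, ?_, hρ0, hρM⟩
  have himage := hcont.image_Icc_of_antitoneOn hM0 hanti.antitoneOn
  rw [hρ0, hρM] at himage
  exact himage ▸ hanti.injOn.bijOn_image

/-- Level sets of a positive solution of `−Δφ = f > 0` are null, and the
rearrangement radius function `ρ` is a continuous decreasing bijection. -/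
theorem level_set_null_and_rho_bijective {n : ℕ} (hn : 1 ≤ n)
    (Ω : Set (Euc n)) (α : ℝ) (hα₀ : 0 < α) (hα₁ : α < 1)
    (hΩ : IsC2AlphaDomain Ω α)
    (f : Euc n → ℝ) (hf : ContinuousOn f (closure Ω))
    (hfpos : ∀ x ∈ closure Ω, 0 < f x)
    (φ : Euc n → ℝ) (hφ : ContDiffOn ℝ 2 φ (closure Ω))
    (heq : ∀ x ∈ Ω, -lap φ x = f x)
    (hφpos : ∀ x ∈ Ω, 0 < φ x) (hφ0 : ∀ x ∈ frontier Ω, φ x = 0)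
    (M : ℝ) (hM : IsGreatest (φ '' closure Ω) M)
    (R : ℝ) (hR : R = ((volume Ω).toReal
      / (volume (Metric.ball (0 : Euc n) 1)).toReal) ^ ((1 : ℝ) / n))
    (ρ : ℝ → ℝ)
    (hρ : ∀ a, ρ a = ((volume {x ∈ Ω | a < φ x}).toReal
      / (volume (Metric.ball (0 : Euc n) 1)).toReal) ^ ((1 : ℝ) / n)) :
    (∀ a ∈ Set.Ioc 0 M, volume {x ∈ Ω | φ x = a} = 0) ∧
    ContinuousOn ρ (Set.Icc 0 M) ∧
    StrictAntiOn ρ (Set.Icc 0 M) ∧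
    Set.BijOn ρ (Set.Icc 0 M) (Set.Icc 0 R) ∧
    ρ 0 = R ∧ ρ M = 0 :=
  level_set_null_and_rho_bijective_general hn Ω α hΩ f hfpos φ hφ heq hφpos hφ0 M hM R hR ρ hρ
end
end

section
/- Let R > 0, τ > 0, and λ ∈ ℝ with 4λ ≤ τ². Suppose φ : [0,R] → ℝ is twice continuously differentiable with φ > 0 on [0,R), φ(R) = 0, φ'(0) = 0, and −φ''(r) + τ φ'(r) = λ φ(r) for all r ∈ [0,R]. Then λ = (τ²/4) · (1 + √(1 − 4λ/τ²))² · exp(−√(1 − 4λ/τ²) · τR). -/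
open MeasureTheory Set
open scoped RealInnerProductSpace

noncomputable section

/-!
Writing `μ, ν = τ(1 ± √(1 - 4λ/τ²))/2` for the roots of `X² - τX + λ`, the operator
`-φ'' + τφ' - λφ` factors as `-(D - μ)(D - ν)`, so `νφ - φ'` grows like `e^{μr}` and
`μφ - φ'` like `e^{νr}`. Evaluating both at `R` with `φ'(0) = 0`, `φ(R) = 0` and
`φ(0) > 0` gives `ν e^{μR} = μ e^{νR}`, hence `λ = μν = μ² e^{-(μ - ν)R}`.
-/

open Real

theorem eq_mul_exp_of_hasDerivWithinAt_Icc {a b μ : ℝ} {ψ : ℝ → ℝ} (hab : a ≤ b)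
    (hψ : ∀ r ∈ Icc a b, HasDerivWithinAt ψ (μ * ψ r) (Icc a b) r) :
    ψ b = ψ a * exp (μ * (b - a)) := by
  set g : ℝ → ℝ := fun r ↦ ψ r * exp (μ * (b - r))
  have hg : ∀ r ∈ Icc a b, HasDerivWithinAt g 0 (Icc a b) r := by
    intro r hr
    have hexp : HasDerivWithinAt (fun r ↦ exp (μ * (b - r))) (exp (μ * (b - r)) * (μ * -1))
        (Icc a b) r :=
      (((hasDerivAt_id r).const_sub b).const_mul μ).exp.hasDerivWithinAt
    exact ((hψ r hr).mul hexp).congr_deriv (by ring)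
  have hconst := constant_of_has_deriv_right_zero
    (fun r hr ↦ (hg r hr).continuousWithinAt)
    (fun r hr ↦ (hg r (Ico_subset_Icc_self hr)).mono_of_mem_nhdsWithin (Icc_mem_nhdsGE_of_mem hr))
    b (right_mem_Icc.2 hab)
  simpa [g] using hconst

theorem hasDerivWithinAt_sub_of_eigen_eq {s : Set ℝ} {τ lam μ ν : ℝ} {φ φ' φ'' : ℝ → ℝ}
    (hsum : μ + ν = τ) (hprod : μ * ν = lam)
    (hd1 : ∀ r ∈ s, HasDerivWithinAt φ (φ' r) s r)
    (hd2 : ∀ r ∈ s, HasDerivWithinAt φ' (φ'' r) s r)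
    (heq : ∀ r ∈ s, -φ'' r + τ * φ' r = lam * φ r) :
    ∀ r ∈ s, HasDerivWithinAt (fun r ↦ ν * φ r - φ' r) (μ * (ν * φ r - φ' r)) s r := by
  intro r hr
  refine (((hd1 r hr).const_mul ν).sub (hd2 r hr)).congr_deriv ?_
  linear_combination heq r hr + φ' r * hsum - φ r * hprod

theorem eq_sq_mul_exp_of_eigen_eq {R τ lam μ ν : ℝ} {φ φ' φ'' : ℝ → ℝ} (hR : 0 ≤ R)
    (hsum : μ + ν = τ) (hprod : μ * ν = lam)
    (hd1 : ∀ r ∈ Icc 0 R, HasDerivWithinAt φ (φ' r) (Icc 0 R) r)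
    (hd2 : ∀ r ∈ Icc 0 R, HasDerivWithinAt φ' (φ'' r) (Icc 0 R) r)
    (heq : ∀ r ∈ Icc 0 R, -φ'' r + τ * φ' r = lam * φ r)
    (h0 : φ 0 ≠ 0) (hbd : φ R = 0) (hneu : φ' 0 = 0) :
    lam = μ ^ 2 * exp (-((μ - ν) * R)) := by
  have hψ := eq_mul_exp_of_hasDerivWithinAt_Icc hR
    (hasDerivWithinAt_sub_of_eigen_eq hsum hprod hd1 hd2 heq)
  have hχ := eq_mul_exp_of_hasDerivWithinAt_Icc hR
    (hasDerivWithinAt_sub_of_eigen_eq ((add_comm ν μ).trans hsum) ((mul_comm ν μ).trans hprod)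
      hd1 hd2 heq)
  simp only [hbd, hneu, mul_zero, sub_zero, zero_sub] at hψ hχ
  have hkey : ν * exp (μ * R) = μ * exp (ν * R) :=
    mul_left_cancel₀ h0 (by linear_combination hχ - hψ)
  calc lam = μ * (ν * exp (μ * R)) * exp (-(μ * R)) := by
        rw [mul_assoc, mul_assoc, ← exp_add, add_neg_cancel, exp_zero, mul_one, hprod]
    _ = μ ^ 2 * exp (-((μ - ν) * R)) := by
        rw [hkey, sub_mul, neg_sub, sub_eq_add_neg, exp_add]; ring

theorem one_dim_eigenvalue_equation_general (R τ lam : ℝ) (hR : 0 < R) (hτ : 0 < τ)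
    (hlam : 4 * lam ≤ τ ^ 2)
    (φ φ' φ'' : ℝ → ℝ)
    (hd1 : ∀ r ∈ Set.Icc 0 R, HasDerivWithinAt φ (φ' r) (Set.Icc 0 R) r)
    (hd2 : ∀ r ∈ Set.Icc 0 R, HasDerivWithinAt φ' (φ'' r) (Set.Icc 0 R) r)
    (hpos : ∀ r ∈ Set.Ico 0 R, 0 < φ r)
    (hbd : φ R = 0) (hneu : φ' 0 = 0)
    (heq : ∀ r ∈ Set.Icc 0 R, -φ'' r + τ * φ' r = lam * φ r) :
    lam = τ ^ 2 / 4 * (1 + Real.sqrt (1 - 4 * lam / τ ^ 2)) ^ 2 *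
      Real.exp (-(Real.sqrt (1 - 4 * lam / τ ^ 2) * (τ * R))) := by
  set s := Real.sqrt (1 - 4 * lam / τ ^ 2)
  have hs : s ^ 2 = 1 - 4 * lam / τ ^ 2 :=
    sq_sqrt (sub_nonneg.2 ((div_le_one (by positivity)).2 (by linarith)))
  have hprod : τ * (1 + s) / 2 * (τ * (1 - s) / 2) = lam := by
    rw [show τ * (1 + s) / 2 * (τ * (1 - s) / 2) = τ ^ 2 * (1 - s ^ 2) / 4 by ring, hs]
    field_simp
    ring
  have h := eq_sq_mul_exp_of_eigen_eq hR.le (by ring) hprod hd1 hd2 heq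
    (hpos 0 ⟨le_rfl, hR⟩).ne' hbd hneu
  rw [h, show (τ * (1 + s) / 2 - τ * (1 - s) / 2) * R = s * (τ * R) by ring]
  ring

/-- Explicit transcendental equation for the one-dimensional principal
eigenvalue of `−d²/dr² + τ d/dr` on `[0,R]`. -/
theorem one_dim_eigenvalue_equation (R τ lam : ℝ) (hR : 0 < R) (hτ : 0 < τ)
    (hlam : 4 * lam ≤ τ ^ 2)
    (φ φ' φ'' : ℝ → ℝ)
    (hd1 : ∀ r ∈ Set.Icc 0 R, HasDerivWithinAt φ (φ' r) (Set.Icc 0 R) r)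
    (hd2 : ∀ r ∈ Set.Icc 0 R, HasDerivWithinAt φ' (φ'' r) (Set.Icc 0 R) r)
    (hc1 : ContinuousOn φ' (Set.Icc 0 R))
    (hc2 : ContinuousOn φ'' (Set.Icc 0 R))
    (hpos : ∀ r ∈ Set.Ico 0 R, 0 < φ r)
    (hbd : φ R = 0) (hneu : φ' 0 = 0)
    (heq : ∀ r ∈ Set.Icc 0 R, -φ'' r + τ * φ' r = lam * φ r) :
    lam = τ ^ 2 / 4 * (1 + Real.sqrt (1 - 4 * lam / τ ^ 2)) ^ 2 *
      Real.exp (-(Real.sqrt (1 - 4 * lam / τ ^ 2) * (τ * R))) :=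
  one_dim_eigenvalue_equation_general R τ lam hR hτ hlam φ φ' φ'' hd1 hd2 hpos hbd hneu heq
end
end

section
/- Let n ≥ 2, R > 0, τ ≥ 0, and let B be the open Euclidean ball of radius R centered at 0 in ℝⁿ. Let (λ, φ) be a principal eigenpair for −Δ + τ e_r·∇ on B. Let μ ∈ ℝ and ψ : [0,R] → ℝ be twice continuously differentiable with ψ > 0 on [0,R), ψ(R) = 0, ψ'(0) = 0, and −ψ''(r) + τ ψ'(r) = μ ψ(r) for all r ∈ [0,R]. Then λ > μ. -/
open MeasureTheory Set
open scoped RealInnerProductSpace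

noncomputable section

open Filter Topology

/-- Second derivative test: at a local max, the second derivative is ≤ 0. -/
lemma second_deriv_test {f f' : ℝ → ℝ} {a c : ℝ} {s : Set ℝ} (hs : s ∈ 𝓝 a)
    (hf : ∀ t ∈ s, HasDerivAt f (f' t) t) (h2 : HasDerivAt f' c a)
    (hmax : IsLocalMax f a) : c ≤ 0 := by
  by_contra hc
  push_neg at hc
  have hfa : f' a = 0 := by
    have h := hmax.deriv_eq_zero
    rwa [(hf a (mem_of_mem_nhds hs)).deriv] at h
  have hslope : Tendsto (slope f' a) (𝓝[≠] a) (𝓝 c) := hasDerivAt_iff_tendsto_slope.1 h2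
  have h1 : ∀ᶠ t in 𝓝[>] a, 0 < slope f' a t := by
    have : ∀ᶠ u in 𝓝 c, 0 < u := eventually_gt_nhds hc
    exact (hslope.mono_left (nhdsWithin_mono _ (fun t ht => ne_of_gt ht))).eventually this
  have h1' : ∀ᶠ t in 𝓝[>] a, 0 < f' t := by
    filter_upwards [h1, self_mem_nhdsWithin] with t ht hta
    have hsl : slope f' a t = f' t / (t - a) := by
      simp [slope_def_field, hfa]
    rw [hsl] at ht
    have htp : 0 < t - a := sub_pos.2 hta
    rcases div_pos_iff.mp ht with ⟨h, _⟩ | ⟨_, h⟩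
    · exact h
    · linarith
  have h2' : ∀ᶠ t in 𝓝[>] a, f t ≤ f a := hmax.filter_mono nhdsWithin_le_nhds
  have h3' : s ∈ 𝓝[>] a := mem_nhdsWithin_of_mem_nhds hs
  obtain ⟨b, hab, hIoc⟩ := (mem_nhdsGT_iff_exists_Ioc_subset).mp
    (inter_mem (inter_mem h1' h2') h3')
  have hmono : StrictMonoOn f (Icc a b) := by
    apply strictMonoOn_of_deriv_pos (convex_Icc a b)
    · intro t ht
      rcases eq_or_lt_of_le ht.1 with rfl | hlt
      · exact (hf _ (mem_of_mem_nhds hs)).continuousAt.continuousWithinAt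
      · exact (hf t (hIoc ⟨hlt, ht.2⟩).2).continuousAt.continuousWithinAt
    · intro t ht
      rw [interior_Icc] at ht
      have hmem := hIoc ⟨ht.1, le_of_lt ht.2⟩
      rw [(hf t hmem.2).deriv]
      exact hmem.1.1
  have hb : f a < f b := hmono (left_mem_Icc.2 (le_of_lt hab)) (right_mem_Icc.2 (le_of_lt hab)) hab
  exact absurd hb (not_lt.2 (hIoc ⟨hab, le_refl b⟩).1.2)


/-- Two functions continuous on an open set that agree a.e. agree everywhere. -/
lemma ae_to_everywhere {n : ℕ} {Ω : Set (Euc n)} (hΩ : IsOpen Ω) {f g : Euc n → ℝ}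
    (hf : ContinuousOn f Ω) (hg : ContinuousOn g Ω)
    (h : ∀ᵐ x ∂(volume.restrict Ω), f x = g x) : ∀ x ∈ Ω, f x = g x := by
  intro x hx
  by_contra hne
  have hca : ContinuousAt (fun y => f y - g y) x :=
    ((hf.continuousAt (hΩ.mem_nhds hx)).sub (hg.continuousAt (hΩ.mem_nhds hx)))
  have hev : ∀ᶠ y in 𝓝 x, f y - g y ≠ 0 := hca.eventually_ne (sub_ne_zero.2 hne)
  have hmem : {y | f y ≠ g y} ∩ Ω ∈ 𝓝 x := by
    apply inter_mem _ (hΩ.mem_nhds hx)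
    filter_upwards [hev] with y hy
    exact sub_ne_zero.mp hy
  obtain ⟨ε, hε, hball⟩ := Metric.mem_nhds_iff.mp hmem
  have h0 : volume.restrict Ω {y | ¬ (f y = g y)} = 0 := ae_iff.mp h
  have hle : volume.restrict Ω (Metric.ball x ε) ≤ 0 := by
    rw [← h0]
    exact measure_mono (fun y hy => (hball hy).1)
  have hra : volume.restrict Ω (Metric.ball x ε) = volume (Metric.ball x ε ∩ Ω) :=
    Measure.restrict_apply Metric.isOpen_ball.measurableSet
  have hpos : (0 : ENNReal) < volume (Metric.ball x ε ∩ Ω) := by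
    apply IsOpen.measure_pos volume (Metric.isOpen_ball.inter hΩ)
    exact ⟨x, Metric.mem_ball_self hε, hx⟩
  rw [hra] at hle
  exact hpos.ne' (le_antisymm hle zero_le)

section Psi

variable {R τ μ : ℝ} {ψ ψ' ψ'' : ℝ → ℝ}

/-- Facts about the 1-D eigenfunction: the eigenvalue is positive and ψ' < 0 on (0,R]. -/
lemma psi_facts (hR : 0 < R) (hτ : 0 ≤ τ)
    (hd1 : ∀ r ∈ Set.Icc 0 R, HasDerivWithinAt ψ (ψ' r) (Set.Icc 0 R) r)
    (hd2 : ∀ r ∈ Set.Icc 0 R, HasDerivWithinAt ψ' (ψ'' r) (Set.Icc 0 R) r)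
    (hpos : ∀ r ∈ Set.Ico 0 R, 0 < ψ r)
    (hbd : ψ R = 0) (hneu : ψ' 0 = 0)
    (heq : ∀ r ∈ Set.Icc 0 R, -ψ'' r + τ * ψ' r = μ * ψ r) :
    0 < μ ∧ ∀ r ∈ Set.Ioc 0 R, ψ' r < 0 := by
  set E : ℝ → ℝ := fun r => Real.exp (-τ * r) * ψ' r with hE
  have hIccnhds : ∀ r ∈ Set.Ioo 0 R, Set.Icc 0 R ∈ 𝓝 r := by
    intro r hr
    exact Icc_mem_nhds hr.1 hr.2
  have hexp : ∀ r : ℝ, HasDerivAt (fun s => Real.exp (-τ * s)) (Real.exp (-τ * r) * (-τ)) r := by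
    intro r
    have hlin : HasDerivAt (fun s : ℝ => -τ * s) (-τ) r := by
      simpa using (hasDerivAt_id r).const_mul (-τ)
    exact hlin.exp
  have hEderiv : ∀ r ∈ Set.Icc 0 R,
      HasDerivWithinAt E (Real.exp (-τ * r) * (-μ * ψ r)) (Set.Icc 0 R) r := by
    intro r hr
    have h := ((hexp r).hasDerivWithinAt.mul (hd2 r hr))
    have heq' : Real.exp (-τ * r) * (-τ) * ψ' r + Real.exp (-τ * r) * ψ'' r
        = Real.exp (-τ * r) * (-μ * ψ r) := by
      have h := heq r hr
      rw [show -μ * ψ r = ψ'' r - τ * ψ' r by linarith]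
      ring
    rwa [heq'] at h
  have hEcont : ContinuousOn E (Set.Icc 0 R) :=
    fun r hr => (hEderiv r hr).continuousWithinAt
  have hpsicont : ContinuousOn ψ (Set.Icc 0 R) :=
    fun r hr => (hd1 r hr).continuousWithinAt
  have hE0 : E 0 = 0 := by simp [hE, hneu]
  have hEat : ∀ r ∈ Set.Ioo 0 R, HasDerivAt E (Real.exp (-τ * r) * (-μ * ψ r)) r := by
    intro r hr
    exact (hEderiv r (Set.mem_Icc_of_Ioo hr)).hasDerivAt (hIccnhds r hr)
  have hψat : ∀ r ∈ Set.Ioo 0 R, HasDerivAt ψ (ψ' r) r := by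
    intro r hr
    exact (hd1 r (Set.mem_Icc_of_Ioo hr)).hasDerivAt (hIccnhds r hr)
  have hμpos : 0 < μ := by
    by_contra hμ
    push_neg at hμ
    -- E monotone, so ψ' ≥ 0, so ψ monotone, so ψ R ≥ ψ 0 > 0, contradiction
    have hEmono : MonotoneOn E (Set.Icc 0 R) := by
      apply monotoneOn_of_deriv_nonneg (convex_Icc 0 R) hEcont
      · intro r hr
        rw [interior_Icc] at hr
        exact (hEat r hr).differentiableAt.differentiableWithinAt
      · intro r hr
        rw [interior_Icc] at hr
        rw [(hEat r hr).deriv]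
        have h1 : 0 < ψ r := hpos r ⟨le_of_lt hr.1, hr.2⟩
        have h2 : 0 < Real.exp (-τ * r) := Real.exp_pos _
        exact mul_nonneg h2.le (mul_nonneg (by linarith) h1.le)
    have hψ'nonneg : ∀ r ∈ Set.Ioo 0 R, 0 ≤ ψ' r := by
      intro r hr
      have := hEmono (Set.left_mem_Icc.2 (le_of_lt hR)) (Set.mem_Icc_of_Ioo hr) (le_of_lt hr.1)
      rw [hE0] at this
      have h2 : 0 < Real.exp (-τ * r) := Real.exp_pos _
      by_contra hcon
      push_neg at hcon
      have := mul_neg_of_pos_of_neg h2 hcon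
      simp only [E] at *
      linarith
    have hψmono : MonotoneOn ψ (Set.Icc 0 R) := by
      apply monotoneOn_of_deriv_nonneg (convex_Icc 0 R) hpsicont
      · intro r hr
        rw [interior_Icc] at hr
        exact (hψat r hr).differentiableAt.differentiableWithinAt
      · intro r hr
        rw [interior_Icc] at hr
        rw [(hψat r hr).deriv]
        exact hψ'nonneg r hr
    have := hψmono (Set.left_mem_Icc.2 (le_of_lt hR)) (Set.right_mem_Icc.2 (le_of_lt hR)) (le_of_lt hR)
    have h0 : 0 < ψ 0 := hpos 0 ⟨le_refl 0, hR⟩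
    rw [hbd] at this
    linarith
  refine ⟨hμpos, ?_⟩
  have hEanti : StrictAntiOn E (Set.Icc 0 R) := by
    apply strictAntiOn_of_deriv_neg (convex_Icc 0 R) hEcont
    intro r hr
    rw [interior_Icc] at hr
    rw [(hEat r hr).deriv]
    have h1 : 0 < ψ r := hpos r ⟨le_of_lt hr.1, hr.2⟩
    have h2 : 0 < Real.exp (-τ * r) := Real.exp_pos _
    exact mul_neg_of_pos_of_neg h2 (by nlinarith [mul_pos hμpos h1])
  intro r hr
  have := hEanti (Set.left_mem_Icc.2 (le_of_lt hR)) ⟨le_of_lt hr.1, hr.2⟩ hr.1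
  rw [hE0] at this
  have h2 : 0 < Real.exp (-τ * r) := Real.exp_pos _
  by_contra hcon
  push_neg at hcon
  have := mul_nonneg h2.le hcon
  simp only [E] at *
  linarith

end Psi

section Line

variable {n : ℕ}

lemma hasDerivAt_line (x v : Euc n) (t : ℝ) :
    HasDerivAt (fun s : ℝ => x + s • v) v t := by
  have h : HasDerivAt (fun s : ℝ => s • v) ((1 : ℝ) • v) t := (hasDerivAt_id t).smul_const v
  simpa using h.const_add x

lemma line_deriv {f : Euc n → ℝ} {U : Set (Euc n)} (hU : IsOpen U)
    (hf : DifferentiableOn ℝ f U) {x v : Euc n} {t : ℝ} (ht : x + t • v ∈ U) :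
    HasDerivAt (fun s : ℝ => f (x + s • v)) (fderiv ℝ f (x + t • v) v) t := by
  have hfa : HasFDerivAt f (fderiv ℝ f (x + t • v)) (x + t • v) :=
    (hf.differentiableAt (hU.mem_nhds ht)).hasFDerivAt
  exact hfa.comp_hasDerivAt t (hasDerivAt_line x v t)

lemma line_second_deriv {f : Euc n → ℝ} {x v : Euc n} (hf : ContDiffAt ℝ 2 f x) :
    HasDerivAt (fun t : ℝ => fderiv ℝ f (x + t • v) v)
      (iteratedFDeriv ℝ 2 f x ![v, v]) 0 := by
  have hf' : ContDiffAt ℝ 1 (fderiv ℝ f) x := hf.fderiv_right (by norm_num)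
  have hdiff : DifferentiableAt ℝ (fderiv ℝ f) x := hf'.differentiableAt (by norm_num)
  have hx0 : x + (0 : ℝ) • v = x := by simp
  have h1 : HasDerivAt (fun t : ℝ => fderiv ℝ f (x + t • v))
      (fderiv ℝ (fderiv ℝ f) x v) 0 := by
    have hfa := hdiff.hasFDerivAt
    rw [← hx0] at hfa
    have h := hfa.comp_hasDerivAt 0 (hasDerivAt_line x v 0)
    rw [hx0] at h
    exact h
  have h2 := h1.clm_apply (hasDerivAt_const 0 v)
  simp only [hasDerivAt_const, map_zero, add_zero] at h2
  rw [iteratedFDeriv_two_apply]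
  simpa using h2

end Line

section NormDeriv

variable {n : ℕ}

lemma hasFDerivAt_norm_euc {x : Euc n} (hx : x ≠ 0) :
    HasFDerivAt (fun y : Euc n => ‖y‖) (‖x‖⁻¹ • (innerSL ℝ x)) x := by
  have hnormpos : 0 < ‖x‖ := norm_pos_iff.2 hx
  have hsq : HasFDerivAt (fun y : Euc n => ‖y‖ ^ 2)
      (2 • ((innerSL ℝ x).comp (ContinuousLinearMap.id ℝ (Euc n)))) x := by
    simpa using (hasFDerivAt_id x).norm_sq
  have hne : ‖x‖ ^ 2 ≠ 0 := pow_ne_zero 2 hnormpos.ne'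
  have hs := hsq.sqrt hne
  have heqf : (fun y : Euc n => Real.sqrt (‖y‖ ^ 2)) = fun y : Euc n => ‖y‖ := by
    funext y
    exact Real.sqrt_sq (norm_nonneg y)
  rw [heqf] at hs
  refine hs.congr_fderiv ?_
  rw [Real.sqrt_sq (norm_nonneg x)]
  ext v
  simp only [ContinuousLinearMap.smul_apply, ContinuousLinearMap.coe_smul',
    Pi.smul_apply, ContinuousLinearMap.coe_comp', Function.comp_apply,
    ContinuousLinearMap.coe_id', id_eq, smul_eq_mul]
  rw [two_smul]
  simp only [ContinuousLinearMap.add_apply, innerSL_apply_apply]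
  field_simp
  ring

lemma hasDerivAt_norm_line {x v : Euc n} {t : ℝ} (hxt : x + t • v ≠ 0) :
    HasDerivAt (fun s : ℝ => ‖x + s • v‖)
      (⟪x + t • v, v⟫ / ‖x + t • v‖) t := by
  have h := (hasFDerivAt_norm_euc hxt).comp_hasDerivAt t (hasDerivAt_line x v t)
  simp only [Function.comp_def] at h
  refine h.congr_deriv ?_
  rw [ContinuousLinearMap.smul_apply, innerSL_apply_apply, smul_eq_mul, div_eq_inv_mul]

end NormDeriv

section Cont

variable {n : ℕ} {f : Euc n → ℝ} {Ω : Set (Euc n)}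

lemma lap_continuousOn (hΩ : IsOpen Ω) (hf : ContDiffOn ℝ 2 f Ω) :
    ContinuousOn (lap f) Ω := by
  have h2 : ContinuousOn (fun x => iteratedFDeriv ℝ 2 f x) Ω := by
    have h := hf.continuousOn_iteratedFDerivWithin (m := 2) (by norm_num) hΩ.uniqueDiffOn
    exact h.congr (iteratedFDerivWithin_of_isOpen 2 hΩ).symm
  apply continuousOn_finset_sum
  intro i _
  exact (continuous_eval_const _).comp_continuousOn h2

lemma gradient_continuousOn (hΩ : IsOpen Ω) (hf : ContDiffOn ℝ 2 f Ω) :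
    ContinuousOn (gradient f) Ω := by
  have h1 : ContinuousOn (fderiv ℝ f) Ω := by
    have h := hf.continuousOn_fderivWithin hΩ.uniqueDiffOn (by norm_num)
    exact h.congr (fun x hx => (fderivWithin_of_isOpen hΩ hx).symm)
  exact ((InnerProductSpace.toDual ℝ (Euc n)).symm.continuous.comp_continuousOn h1)

lemma inner_gradient (f : Euc n → ℝ) (x u : Euc n) :
    ⟪u, gradient f x⟫ = fderiv ℝ f x u := by
  rw [real_inner_comm]
  exact InnerProductSpace.toDual_symm_apply

end Cont

section AbsPsi

variable {R : ℝ} {ψ ψ' ψ'' : ℝ → ℝ}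

lemma abs_map_tendsto (R : ℝ) (hR : 0 < R) :
    Filter.Tendsto (fun t : ℝ => |t|) (𝓝[≠] (0:ℝ)) (𝓝[Set.Icc 0 R \ {0}] 0) := by
  apply tendsto_nhdsWithin_of_tendsto_nhds_of_eventually_within
  · have h : Filter.Tendsto (fun t : ℝ => |t|) (𝓝 (0:ℝ)) (𝓝 |0|) :=
      continuous_abs.continuousAt
    simpa using h.mono_left nhdsWithin_le_nhds
  · have h1 : ∀ᶠ t : ℝ in 𝓝 (0:ℝ), |t| ≤ R := by
      filter_upwards [Metric.ball_mem_nhds (0:ℝ) hR] with t ht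
      rw [Real.ball_eq_Ioo] at ht
      rw [abs_le]
      constructor <;> [linarith [ht.1]; linarith [ht.2]]
    filter_upwards [h1.filter_mono nhdsWithin_le_nhds, self_mem_nhdsWithin] with t ht hne
    refine ⟨⟨abs_nonneg t, ht⟩, ?_⟩
    simp only [Set.mem_singleton_iff, abs_eq_zero]
    exact hne

lemma hasDerivAt_absPsi (hR : 0 < R)
    (hd1 : ∀ r ∈ Set.Icc 0 R, HasDerivWithinAt ψ (ψ' r) (Set.Icc 0 R) r)
    (hneu : ψ' 0 = 0) {t : ℝ} (ht : |t| < R) :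
    HasDerivAt (fun s : ℝ => ψ |s|) (Real.sign t * ψ' |t|) t := by
  rcases lt_trichotomy t 0 with hneg | rfl | hpos
  · have habs : |t| = -t := abs_of_neg hneg
    have hmem : -t ∈ Set.Ioo 0 R := ⟨by linarith, by rw [← habs]; exact ht⟩
    have hψat : HasDerivAt ψ (ψ' (-t)) (-t) :=
      (hd1 (-t) (Set.mem_Icc_of_Ioo hmem)).hasDerivAt (Icc_mem_nhds hmem.1 hmem.2)
    have hneg' : HasDerivAt (fun s : ℝ => ψ (-s)) (-ψ' (-t)) t := by
      simpa [Function.comp_def] using hψat.comp t (hasDerivAt_neg t)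
    have heq : (fun s : ℝ => ψ |s|) =ᶠ[𝓝 t] fun s : ℝ => ψ (-s) := by
      filter_upwards [Iio_mem_nhds hneg] with s hs
      rw [abs_of_neg hs]
    have hval : Real.sign t * ψ' |t| = -ψ' (-t) := by
      rw [habs, Real.sign_of_neg hneg]; ring
    rw [hval]
    exact hneg'.congr_of_eventuallyEq heq
  · -- t = 0
    simp only [abs_zero, Real.sign_zero, zero_mul]
    rw [hasDerivAt_iff_tendsto_slope]
    have hslope : Filter.Tendsto (slope ψ 0) (𝓝[Set.Icc 0 R \ {0}] 0) (𝓝 (ψ' 0)) :=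
      hasDerivWithinAt_iff_tendsto_slope.1 (hd1 0 ⟨le_refl 0, hR.le⟩)
    have T : Filter.Tendsto (fun t : ℝ => slope ψ 0 |t|) (𝓝[≠] (0:ℝ)) (𝓝 (ψ' 0)) :=
      hslope.comp (abs_map_tendsto R hR)
    rw [hneu] at T
    apply squeeze_zero_norm' (a := fun t : ℝ => ‖slope ψ 0 |t|‖)
    · filter_upwards [self_mem_nhdsWithin] with s hs
      have h1 : slope (fun u : ℝ => ψ |u|) 0 s = (ψ |s| - ψ 0) / s := by
        simp [slope_def_field]
      have h2 : slope ψ 0 |s| = (ψ |s| - ψ 0) / |s| := by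
        simp [slope_def_field]
      rw [h1, h2, Real.norm_eq_abs, Real.norm_eq_abs, abs_div, abs_div, abs_abs]
    · exact tendsto_zero_iff_norm_tendsto_zero.mp T
  · have habs : |t| = t := abs_of_pos hpos
    have hmem : t ∈ Set.Ioo 0 R := ⟨hpos, by rw [← habs]; exact ht⟩
    have hψat : HasDerivAt ψ (ψ' t) t :=
      (hd1 t (Set.mem_Icc_of_Ioo hmem)).hasDerivAt (Icc_mem_nhds hmem.1 hmem.2)
    have heq : (fun s : ℝ => ψ |s|) =ᶠ[𝓝 t] ψ := by
      filter_upwards [Ioi_mem_nhds hpos] with s hs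
      rw [abs_of_pos hs]
    have hval : Real.sign t * ψ' |t| = ψ' t := by
      rw [habs, Real.sign_of_pos hpos]; ring
    rw [hval]
    exact hψat.congr_of_eventuallyEq heq

lemma hasDerivAt_absPsi_deriv (hR : 0 < R)
    (hd2 : ∀ r ∈ Set.Icc 0 R, HasDerivWithinAt ψ' (ψ'' r) (Set.Icc 0 R) r)
    (hneu : ψ' 0 = 0) :
    HasDerivAt (fun t : ℝ => Real.sign t * ψ' |t|) (ψ'' 0) 0 := by
  rw [hasDerivAt_iff_tendsto_slope]
  have hslope : Filter.Tendsto (slope ψ' 0) (𝓝[Set.Icc 0 R \ {0}] 0) (𝓝 (ψ'' 0)) :=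
    hasDerivWithinAt_iff_tendsto_slope.1 (hd2 0 ⟨le_refl 0, hR.le⟩)
  have T : Filter.Tendsto (fun t : ℝ => slope ψ' 0 |t|) (𝓝[≠] (0:ℝ)) (𝓝 (ψ'' 0)) :=
    hslope.comp (abs_map_tendsto R hR)
  apply T.congr'
  filter_upwards [self_mem_nhdsWithin] with t ht
  have ht' : (t:ℝ) ≠ 0 := ht
  have h2 : slope ψ' 0 |t| = ψ' |t| / |t| := by
    simp [slope_def_field, hneu]
  have h3 : slope (fun s : ℝ => Real.sign s * ψ' |s|) 0 t = Real.sign t * ψ' |t| / t := by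
    simp [slope_def_field, Real.sign_zero]
  rw [h2, h3]
  rcases lt_or_gt_of_ne ht' with hneg | hpos
  · rw [Real.sign_of_neg hneg, abs_of_neg hneg]
    ring
  · rw [Real.sign_of_pos hpos, abs_of_pos hpos]
    ring

end AbsPsi

set_option maxHeartbeats 2000000

/-- For `n ≥ 2`, the principal eigenvalue of `−Δ + τ e_r·∇` in the ball of
radius `R` is strictly larger than the one-dimensional principal eigenvalue
of `−d²/dr² + τ d/dr` on `[0,R]`. -/
theorem ball_eigenvalue_gt_one_dim {n : ℕ} (hn : 2 ≤ n)
    (R τ : ℝ) (hR : 0 < R) (hτ : 0 ≤ τ)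
    (lam : ℝ) (φ : Euc n → ℝ)
    (hpair : IsPrincipalEigenpair (Metric.ball (0 : Euc n) R)
      (fun x => τ • eRad x) lam φ)
    (μ : ℝ) (ψ ψ' ψ'' : ℝ → ℝ)
    (hd1 : ∀ r ∈ Set.Icc 0 R, HasDerivWithinAt ψ (ψ' r) (Set.Icc 0 R) r)
    (hd2 : ∀ r ∈ Set.Icc 0 R, HasDerivWithinAt ψ' (ψ'' r) (Set.Icc 0 R) r)
    (hc1 : ContinuousOn ψ' (Set.Icc 0 R))
    (hc2 : ContinuousOn ψ'' (Set.Icc 0 R))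
    (hpos : ∀ r ∈ Set.Ico 0 R, 0 < ψ r)
    (hbd : ψ R = 0) (hneu : ψ' 0 = 0)
    (heq : ∀ r ∈ Set.Icc 0 R, -ψ'' r + τ * ψ' r = μ * ψ r) :
    μ < lam := by
  by_contra hcon
  push_neg at hcon
  obtain ⟨hφ1, hφ2, hφpos, hφbd, -, hae⟩ := hpair
  set Ω : Set (Euc n) := Metric.ball (0 : Euc n) R with hΩdef
  have hΩopen : IsOpen Ω := Metric.isOpen_ball
  have h0Ω : (0 : Euc n) ∈ Ω := Metric.mem_ball_self hR
  obtain ⟨hμpos, hψ'neg⟩ := psi_facts hR hτ hd1 hd2 hpos hbd hneu heq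
  have hψ0 : 0 < ψ 0 := hpos 0 ⟨le_refl _, hR⟩
  have hψnonneg : ∀ r ∈ Set.Icc 0 R, 0 ≤ ψ r := by
    intro r hr
    rcases eq_or_lt_of_le hr.2 with h | h
    · rw [h, hbd]
    · exact (hpos r ⟨hr.1, h⟩).le
  have hψ''0 : ψ'' 0 = -(μ * ψ 0) := by
    have h := heq 0 ⟨le_refl _, hR.le⟩
    rw [hneu] at h
    linarith
  have hψat : ∀ r ∈ Set.Ioo 0 R, HasDerivAt ψ (ψ' r) r := fun r hr =>
    (hd1 r (Set.mem_Icc_of_Ioo hr)).hasDerivAt (Icc_mem_nhds hr.1 hr.2)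
  have hψ'at : ∀ r ∈ Set.Ioo 0 R, HasDerivAt ψ' (ψ'' r) r := fun r hr =>
    (hd2 r (Set.mem_Icc_of_Ioo hr)).hasDerivAt (Icc_mem_nhds hr.1 hr.2)
  obtain ⟨c₀, hc₀pos, hc₀⟩ : ∃ c₀ > 0, ∀ r ∈ Set.Ioc 0 R, c₀ * r ≤ -ψ' r := by
    have hψ''0neg : ψ'' 0 < 0 := by
      rw [hψ''0]
      nlinarith
    have hcw : ContinuousWithinAt ψ'' (Set.Icc 0 R) 0 := hc2 0 ⟨le_refl _, hR.le⟩
    have hev : ∀ᶠ r in 𝓝[Set.Icc 0 R] (0:ℝ), ψ'' r < ψ'' 0 / 2 :=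
      hcw.eventually_lt_const (by linarith)
    obtain ⟨δ, hδpos, hδ⟩ := Metric.mem_nhdsWithin_iff.mp hev
    set r₁ : ℝ := min (δ / 2) R with hr₁def
    have hr₁pos : 0 < r₁ := lt_min (by linarith) hR
    have hr₁R : r₁ ≤ R := min_le_right _ _
    have hsmall : ∀ r ∈ Set.Ioc 0 r₁, ψ'' r < ψ'' 0 / 2 := by
      intro r hr
      apply hδ
      constructor
      · rw [Metric.mem_ball, Real.dist_eq, sub_zero, abs_of_pos hr.1]
        have := min_le_left (δ/2) R
        linarith [hr.2]
      · exact ⟨hr.1.le, hr.2.trans hr₁R⟩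
    set a : ℝ := -(ψ'' 0) / 2 with hadef
    have hapos : 0 < a := by
      rw [hadef]
      linarith
    have hbound1 : ∀ r ∈ Set.Ioc 0 r₁, a * r ≤ -ψ' r := by
      intro r hr
      have hrR : r ≤ R := hr.2.trans hr₁R
      obtain ⟨ξ, hξmem, hξeq⟩ := exists_hasDerivAt_eq_slope ψ' ψ'' hr.1
        (hc1.mono (Set.Icc_subset_Icc_right hrR))
        (fun x hx => hψ'at x ⟨hx.1, lt_of_lt_of_le hx.2 hrR⟩)
      have hξsmall : ψ'' ξ < ψ'' 0 / 2 := hsmall ξ ⟨hξmem.1, hξmem.2.le.trans hr.2⟩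
      rw [hneu, sub_zero, sub_zero] at hξeq
      have : ψ' r / r < ψ'' 0 / 2 := by rw [← hξeq]; exact hξsmall
      rw [div_lt_iff₀ hr.1] at this
      rw [hadef]
      nlinarith
    -- minimum of -ψ' on [r₁, R]
    obtain ⟨r₂, hr₂mem, hr₂min⟩ := (isCompact_Icc (a := r₁) (b := R)).exists_isMinOn
      (Set.nonempty_Icc.2 hr₁R)
      ((hc1.mono (Set.Icc_subset_Icc_left hr₁pos.le)).neg)
    set m₁ : ℝ := -ψ' r₂ with hm₁def
    have hm₁pos : 0 < m₁ := by
      rw [hm₁def]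
      have := hψ'neg r₂ ⟨lt_of_lt_of_le hr₁pos hr₂mem.1, hr₂mem.2⟩
      linarith
    refine ⟨min a (m₁ / R), lt_min hapos (by positivity), ?_⟩
    intro r hr
    rcases le_or_gt r r₁ with hcase | hcase
    · have h1 := hbound1 r ⟨hr.1, hcase⟩
      have h2 : min a (m₁ / R) * r ≤ a * r := by
        apply mul_le_mul_of_nonneg_right (min_le_left _ _) hr.1.le
      linarith
    · have h1 : -ψ' r ≥ m₁ := hr₂min ⟨hcase.le, hr.2⟩
      have h2 : min a (m₁ / R) * r ≤ (m₁ / R) * r :=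
        mul_le_mul_of_nonneg_right (min_le_right _ _) hr.1.le
      have h3 : (m₁ / R) * r ≤ m₁ := by
        rw [div_mul_eq_mul_div, div_le_iff₀ hR]
        nlinarith [hr.2]
      linarith
  have hn1 : (1 : ℝ) ≤ (n : ℝ) - 1 := by
    have h : (2:ℝ) ≤ (n:ℝ) := by exact_mod_cast hn
    linarith
  set ε : ℝ := min (ψ 0 / 2) (((n : ℝ) - 1) * c₀ / (2 * μ)) with hεdef
  have hεpos : 0 < ε := lt_min (by linarith) (by positivity)
  have hεψ0 : ε < ψ 0 := lt_of_le_of_lt (min_le_left _ _) (by linarith)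
  have hεc₀ : μ * ε < ((n:ℝ) - 1) * c₀ := by
    have h1 : ε ≤ ((n : ℝ) - 1) * c₀ / (2 * μ) := min_le_right _ _
    have h2 : 0 < ((n:ℝ)-1) * c₀ := by positivity
    have h3 : μ * (((n : ℝ) - 1) * c₀ / (2 * μ)) = ((n:ℝ)-1)*c₀/2 := by
      field_simp
    nlinarith
  have hφcont2 : ContinuousOn φ Ω := hφ2.continuousOn
  have hlapcont : ContinuousOn (lap φ) Ω := lap_continuousOn hΩopen hφ2
  have hgradcont : ContinuousOn (gradient φ) Ω := gradient_continuousOn hΩopen hφ2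
  have hpde : ∀ x ∈ Ω \ {(0:Euc n)},
      -lap φ x + ⟪τ • eRad x, gradient φ x⟫ = lam * φ x := by
    have hΩ'open : IsOpen (Ω \ {(0:Euc n)}) := hΩopen.sdiff isClosed_singleton
    have hsub : Ω \ {(0:Euc n)} ⊆ Ω := Set.diff_subset
    have he : ContinuousOn (fun x : Euc n => τ • eRad x) (Ω \ {(0:Euc n)}) := by
      have h1 : ContinuousOn (fun x : Euc n => ‖x‖⁻¹ • x) (Ω \ {(0:Euc n)}) := by
        apply ContinuousOn.smul (f := fun x : Euc n => ‖x‖⁻¹) (g := fun x => x)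
        · exact (continuous_norm.continuousOn).inv₀
            (fun x hx => norm_ne_zero_iff.2 (by simpa using hx.2))
        · exact continuousOn_id
      exact h1.const_smul τ
    have hcontL : ContinuousOn
        (fun x => -lap φ x + ⟪τ • eRad x, gradient φ x⟫) (Ω \ {(0:Euc n)}) :=
      ((hlapcont.mono hsub).neg).add (he.inner (hgradcont.mono hsub))
    have hcontR : ContinuousOn (fun x => lam * φ x) (Ω \ {(0:Euc n)}) :=
      continuousOn_const.mul (hφcont2.mono hsub)
    have hae' : ∀ᵐ x ∂(volume.restrict (Ω \ {(0:Euc n)})),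
        -lap φ x + ⟪τ • eRad x, gradient φ x⟫ = lam * φ x :=
      ae_restrict_of_ae_restrict_of_subset hsub hae
    exact ae_to_everywhere hΩ'open hcontL hcontR hae' 
  -- set up the maximum of the ratio φ / (ψ ∘ ‖·‖ + ε)
  have hcb : closure Ω = Metric.closedBall (0 : Euc n) R := closure_ball 0 hR.ne'
  set den : Euc n → ℝ := fun x => ψ ‖x‖ + ε with hden
  have hnormmem : ∀ x ∈ Metric.closedBall (0 : Euc n) R, ‖x‖ ∈ Set.Icc 0 R := by
    intro x hx
    exact ⟨norm_nonneg x, by rwa [Metric.mem_closedBall, dist_zero_right] at hx⟩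
  have hdenpos : ∀ x ∈ Metric.closedBall (0 : Euc n) R, 0 < den x := by
    intro x hx
    have h := hψnonneg _ (hnormmem x hx)
    simp only [hden]
    linarith
  have hdencont : ContinuousOn den (Metric.closedBall (0:Euc n) R) := by
    have hψc : ContinuousOn ψ (Set.Icc 0 R) := fun r hr => (hd1 r hr).continuousWithinAt
    exact (hψc.comp continuous_norm.continuousOn (fun x hx => hnormmem x hx)).add
      continuousOn_const
  have hφcontcb : ContinuousOn φ (Metric.closedBall (0:Euc n) R) := by
    rw [← hcb]
    exact hφ1.continuousOn
  obtain ⟨x₀, hx₀cb, hx₀max'⟩ := (isCompact_closedBall (0:Euc n) R).exists_isMaxOn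
      ⟨0, Metric.mem_closedBall_self hR.le⟩
      (hφcontcb.div hdencont (fun x hx => (hdenpos x hx).ne'))
  have hx₀max : ∀ y ∈ Metric.closedBall (0:Euc n) R, φ y / den y ≤ φ x₀ / den x₀ :=
    fun y hy => hx₀max' hy
  set S : ℝ := φ x₀ / den x₀ with hS
  have hSpos : 0 < S := by
    have h1 : 0 < φ 0 := hφpos 0 h0Ω
    have h2 : 0 < den 0 := hdenpos 0 (Metric.mem_closedBall_self hR.le)
    exact lt_of_lt_of_le (div_pos h1 h2) (hx₀max 0 (Metric.mem_closedBall_self hR.le))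
  have hx₀in : x₀ ∈ Ω := by
    rcases lt_or_eq_of_le (hnormmem x₀ hx₀cb).2 with h | h
    · rw [hΩdef, Metric.mem_ball, dist_zero_right]
      exact h
    · exfalso
      have hfr : x₀ ∈ frontier Ω := by
        rw [hΩdef, frontier_ball (0:Euc n) hR.ne']
        simpa [Metric.mem_sphere, dist_zero_right] using h
      have hφ0 : φ x₀ = 0 := hφbd x₀ hfr
      rw [hS, hφ0, zero_div] at hSpos
      exact lt_irrefl 0 hSpos
  have hle : ∀ y ∈ Metric.closedBall (0:Euc n) R, φ y ≤ S * den y := by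
    intro y hy
    exact (div_le_iff₀ (hdenpos y hy)).mp (hx₀max y hy)
  have hx₀eq : φ x₀ = S * den x₀ := by
    rw [hS, div_mul_eq_mul_div, mul_div_assoc, div_self (hdenpos x₀ hx₀cb).ne', mul_one]
  set z : Euc n → ℝ := fun y => φ y - S * den y with hz
  have hzx₀ : z x₀ = 0 := by simp [hz, hx₀eq]
  have hzmax : IsLocalMax z x₀ := by
    have hball : Ω ∈ 𝓝 x₀ := hΩopen.mem_nhds hx₀in
    filter_upwards [hball] with y hy
    have h := hle y (Metric.ball_subset_closedBall hy)
    simp only [hz]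
    rw [hx₀eq]
    linarith
  have hφdiff : DifferentiableOn ℝ φ Ω := hφ2.differentiableOn (by norm_num)
  -- local max along coordinate lines
  have hlinemax : ∀ v : Euc n, IsLocalMax (fun t : ℝ => z (x₀ + t • v)) 0 := by
    intro v
    have hL : ContinuousAt (fun t : ℝ => x₀ + t • v) 0 := by fun_prop
    have hL0 : x₀ + (0:ℝ) • v = x₀ := by simp
    rw [ContinuousAt, hL0] at hL
    have h := hL.eventually hzmax
    filter_upwards [h] with t ht
    simpa [hL0] using ht
  rcases eq_or_ne x₀ 0 with hx₀0 | hx₀0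
  · -- the maximum is at the origin
    -- Step 1: the equation lam * φ 0 = - lap φ 0 via radial limits
    have hφ0pos : 0 < φ 0 := hφpos 0 h0Ω
    have hlapCA : ContinuousAt (lap φ) 0 := hlapcont.continuousAt (hΩopen.mem_nhds h0Ω)
    have hgradCA : ContinuousAt (gradient φ) 0 := hgradcont.continuousAt (hΩopen.mem_nhds h0Ω)
    have hφCA : ContinuousAt φ 0 := hφcont2.continuousAt (hΩopen.mem_nhds h0Ω)
    have hray : ∀ u : Euc n, ‖u‖ = 1 →
        lam * φ 0 = -lap φ 0 + τ * ⟪u, gradient φ 0⟫ := by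
      intro u hu
      have hune : u ≠ 0 := by
        intro h
        rw [h, norm_zero] at hu
        norm_num at hu
      have hev : ∀ᶠ t in 𝓝[>] (0:ℝ),
          -lap φ (t • u) + τ * ⟪u, gradient φ (t • u)⟫ = lam * φ (t • u) := by
        filter_upwards [Ioo_mem_nhdsGT_of_mem (Set.mem_Ico.2 ⟨le_refl (0:ℝ), hR⟩)]
          with t ht
        have htpos : 0 < t := ht.1
        have hnorm : ‖t • u‖ = t := by
          rw [norm_smul, hu, mul_one, Real.norm_eq_abs, abs_of_pos htpos]
        have hmem : t • u ∈ Ω \ {(0:Euc n)} := by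
          constructor
          · rw [hΩdef, Metric.mem_ball, dist_zero_right, hnorm]
            exact ht.2
          · simp only [Set.mem_singleton_iff]
            exact smul_ne_zero htpos.ne' hune
        have heRad : eRad (t • u) = u := by
          rw [eRad, hnorm, smul_smul, inv_mul_cancel₀ htpos.ne', one_smul]
        have h := hpde _ hmem
        rw [heRad, real_inner_smul_left] at h
        exact h
      have hT1 : Filter.Tendsto (fun t : ℝ => t • u) (𝓝[>] (0:ℝ)) (𝓝 (0:Euc n)) := by
        have hcont : Continuous (fun t : ℝ => t • u) := by fun_prop
        have h := hcont.tendsto 0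
        simp only [zero_smul] at h
        exact h.mono_left nhdsWithin_le_nhds
      have hT2 : Filter.Tendsto
          (fun t : ℝ => -lap φ (t • u) + τ * ⟪u, gradient φ (t • u)⟫)
          (𝓝[>] (0:ℝ)) (𝓝 (-lap φ 0 + τ * ⟪u, gradient φ 0⟫)) := by
        apply Filter.Tendsto.add
        · exact (hlapCA.tendsto.comp hT1).neg
        · exact (Filter.Tendsto.const_mul τ
            (((continuous_const.inner continuous_id).tendsto _).comp
              (hgradCA.tendsto.comp hT1)))
      have hT3 : Filter.Tendsto (fun t : ℝ => lam * φ (t • u)) (𝓝[>] (0:ℝ))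
          (𝓝 (lam * φ 0)) :=
        Filter.Tendsto.const_mul lam (hφCA.tendsto.comp hT1)
      exact tendsto_nhds_unique hT3 (hT2.congr' hev)
    have hvnorm : ‖(EuclideanSpace.single (⟨0, by omega⟩ : Fin n) 1 : Euc n)‖ = 1 := by
      rw [EuclideanSpace.norm_single]
      norm_num
    have h₁ := hray _ hvnorm
    have h₂ := hray (-(EuclideanSpace.single (⟨0, by omega⟩ : Fin n) 1 : Euc n))
      (by rw [norm_neg]; exact hvnorm)
    rw [inner_neg_left] at h₂
    have hlap0 : lam * φ 0 = -lap φ 0 := by linarith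
    -- Step 2: second derivative bound at the origin
    have hkey : ∀ i : Fin n,
        iteratedFDeriv ℝ 2 φ x₀ ![EuclideanSpace.single i 1, EuclideanSpace.single i 1]
          ≤ S * ψ'' 0 := by
      intro i
      set w : Euc n := EuclideanSpace.single i 1 with hw
      have hwnorm : ‖w‖ = 1 := by
        rw [hw, EuclideanSpace.norm_single]
        norm_num
      have hnorm : ∀ t : ℝ, ‖x₀ + t • w‖ = |t| := by
        intro t
        rw [hx₀0, zero_add, norm_smul, hwnorm, mul_one, Real.norm_eq_abs]
      set s : Set ℝ := {t : ℝ | |t| < R} with hsdef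
      have hsopen : IsOpen s := (isOpen_Iio).preimage continuous_abs
      have hs0 : (0:ℝ) ∈ s := by
        show |(0:ℝ)| < R
        simpa using hR
      have hmem : ∀ t ∈ s, x₀ + t • w ∈ Ω := by
        intro t ht
        rw [hΩdef, Metric.mem_ball, dist_zero_right, hnorm]
        exact ht
      set g' : ℝ → ℝ := fun t => fderiv ℝ φ (x₀ + t • w) w
          - S * (Real.sign t * ψ' |t|) with hg'def
      have hg : ∀ t ∈ s, HasDerivAt (fun u : ℝ => z (x₀ + u • w)) (g' t) t := by
        intro t ht
        have h1 := line_deriv hΩopen hφdiff (x := x₀) (v := w) (hmem t ht)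
        have h2 : HasDerivAt (fun u : ℝ => ψ |u|) (Real.sign t * ψ' |t|) t :=
          hasDerivAt_absPsi hR hd1 hneu ht
        have h3 : HasDerivAt (fun u : ℝ => den (x₀ + u • w)) (Real.sign t * ψ' |t|) t := by
          have hfun : (fun u : ℝ => den (x₀ + u • w)) = fun u : ℝ => ψ |u| + ε := by
            funext u
            rw [hden]
            simp only
            rw [hnorm]
          rw [hfun]
          exact h2.add_const ε
        have h4 := h1.sub (h3.const_mul S)
        rw [hz, hg'def]
        exact h4
      have hC : HasDerivAt g'
          (iteratedFDeriv ℝ 2 φ x₀ ![w, w] - S * ψ'' 0) 0 := by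
        have hA : HasDerivAt (fun t : ℝ => fderiv ℝ φ (x₀ + t • w) w)
            (iteratedFDeriv ℝ 2 φ x₀ ![w, w]) 0 :=
          line_second_deriv (hφ2.contDiffAt (hΩopen.mem_nhds hx₀in))
        have hB := (hasDerivAt_absPsi_deriv hR hd2 hneu).const_mul S
        exact hA.sub hB
      have htest := second_deriv_test (hsopen.mem_nhds hs0) hg hC (hlinemax w)
      rw [sub_nonpos] at htest
      exact htest
    have hlapbd : lap φ x₀ ≤ (n : ℝ) * (S * ψ'' 0) := by
      rw [lap]
      calc ∑ i : Fin n, iteratedFDeriv ℝ 2 φ x₀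
            ![EuclideanSpace.single i 1, EuclideanSpace.single i 1]
          ≤ ∑ _i : Fin n, S * ψ'' 0 := Finset.sum_le_sum (fun i _ => hkey i)
        _ = (n : ℝ) * (S * ψ'' 0) := by
            rw [Finset.sum_const, Finset.card_univ, Fintype.card_fin, nsmul_eq_mul]
    -- Step 3: conclusion
    have hφ0eq : φ 0 = S * (ψ 0 + ε) := by
      have h := hx₀eq
      rw [hx₀0] at h
      rw [h, hden]
      simp
    have hlam : lam * φ 0 ≤ μ * (S * (ψ 0 + ε)) := by
      rw [hφ0eq]
      apply mul_le_mul_of_nonneg_right hcon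
      positivity
    rw [hx₀0] at hlapbd
    have hlow : (n:ℝ) * (S * (μ * ψ 0)) ≤ lam * φ 0 := by
      rw [hlap0]
      rw [hψ''0] at hlapbd
      linarith
    have hn2 : (2:ℝ) ≤ (n:ℝ) := by exact_mod_cast hn
    have hfin := le_trans hlow hlam
    nlinarith [hfin, hn2,
      mul_pos (mul_pos hSpos hμpos) (show (0:ℝ) < ψ 0 - ε by linarith),
      mul_nonneg (mul_nonneg hSpos.le hμpos.le) hψ0.le]
  · -- the maximum is away from the origin
    set r : ℝ := ‖x₀‖ with hrdef
    have hrpos : 0 < r := norm_pos_iff.2 hx₀0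
    have hrR : r < R := by
      have h := hx₀in
      rw [hΩdef, Metric.mem_ball, dist_zero_right] at h
      exact h
    have hrmem : r ∈ Set.Ioo 0 R := ⟨hrpos, hrR⟩
    have hrne : r ≠ 0 := hrpos.ne'
    -- gradient identity from the vanishing derivative of z at x₀
    have hnormD : HasFDerivAt (fun y : Euc n => ‖y‖) (r⁻¹ • (innerSL ℝ x₀)) x₀ :=
      hasFDerivAt_norm_euc hx₀0
    have hdenD : HasFDerivAt den ((ψ' r) • (r⁻¹ • (innerSL ℝ x₀))) x₀ := by
      have h1 := (hψat r hrmem).comp_hasFDerivAt x₀ hnormD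
      have h2 : den = fun y : Euc n => ψ ‖y‖ + ε := hden
      rw [h2]
      exact h1.add_const ε
    have hφD : HasFDerivAt φ (fderiv ℝ φ x₀) x₀ :=
      (hφdiff.differentiableAt (hΩopen.mem_nhds hx₀in)).hasFDerivAt
    have hzD : HasFDerivAt z
        (fderiv ℝ φ x₀ - S • ((ψ' r) • (r⁻¹ • (innerSL ℝ x₀)))) x₀ := by
      have h := hφD.sub (hdenD.const_mul S)
      exact h
    have hfd0 := hzmax.hasFDerivAt_eq_zero hzD
    have hφderiv : fderiv ℝ φ x₀ = S • ((ψ' r) • (r⁻¹ • (innerSL ℝ x₀))) :=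
      sub_eq_zero.mp hfd0
    -- the drift term at x₀
    have hinner : ⟪τ • eRad x₀, gradient φ x₀⟫ = τ * (S * ψ' r) := by
      rw [real_inner_smul_left, inner_gradient, hφderiv]
      have hx₀sq : ⟪x₀, x₀⟫ = r * r := real_inner_self_eq_norm_mul_norm x₀
      simp only [eRad, ContinuousLinearMap.smul_apply, innerSL_apply_apply, smul_eq_mul,
        real_inner_smul_right, ← hrdef]
      rw [hx₀sq]
      field_simp
    -- second-derivative bound in each coordinate direction
    have hkey : ∀ i : Fin n,
        iteratedFDeriv ℝ 2 φ x₀ ![EuclideanSpace.single i 1, EuclideanSpace.single i 1]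
          ≤ S * (ψ'' r * (⟪x₀, (EuclideanSpace.single i 1 : Euc n)⟫ / r) * (⟪x₀, (EuclideanSpace.single i 1 : Euc n)⟫ / r)
            + ψ' r * ((1 * r - ⟪x₀, (EuclideanSpace.single i 1 : Euc n)⟫ * (⟪x₀, (EuclideanSpace.single i 1 : Euc n)⟫ / r)) / r ^ 2)) := by
      intro i
      set v : Euc n := EuclideanSpace.single i 1 with hv
      set c : ℝ := ⟪x₀, v⟫ with hcdef
      have hvv : ⟪(v : Euc n), v⟫ = 1 := by
        rw [hv]
        rw [real_inner_self_eq_norm_mul_norm, EuclideanSpace.norm_single]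
        norm_num
      have hPt : ∀ t : ℝ, ⟪x₀ + t • v, v⟫ = c + t := by
        intro t
        rw [inner_add_left, real_inner_smul_left, hvv, mul_one, hcdef]
      set s : Set ℝ := {t : ℝ | x₀ + t • v ∈ Ω ∧ x₀ + t • v ≠ 0} with hsdef
      have hsopen : IsOpen s := by
        have hcont : Continuous (fun t : ℝ => x₀ + t • v) := by fun_prop
        have h1 : IsOpen {t : ℝ | x₀ + t • v ∈ Ω} := hΩopen.preimage hcont
        have h2 : IsOpen {t : ℝ | x₀ + t • v ≠ 0} :=
          (isOpen_compl_singleton).preimage hcont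
        exact h1.inter h2
      have hs0 : (0:ℝ) ∈ s := by
        constructor <;> simp [hx₀in, hx₀0]
      have hx00 : x₀ + (0:ℝ) • v = x₀ := by simp
      set g' : ℝ → ℝ := fun t => fderiv ℝ φ (x₀ + t • v) v
          - S * (ψ' ‖x₀ + t • v‖ * (⟪x₀ + t • v, v⟫ / ‖x₀ + t • v‖)) with hg'def
      have hg : ∀ t ∈ s, HasDerivAt (fun u : ℝ => z (x₀ + u • v)) (g' t) t := by
        intro t ht
        have h1 := line_deriv hΩopen hφdiff (x := x₀) (v := v) ht.1
        have hn0 : x₀ + t • v ≠ 0 := ht.2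
        have hnlt : ‖x₀ + t • v‖ ∈ Set.Ioo 0 R := by
          constructor
          · exact norm_pos_iff.2 hn0
          · have h := ht.1
            rw [hΩdef, Metric.mem_ball, dist_zero_right] at h
            exact h
        have h2 : HasDerivAt (fun u : ℝ => ψ ‖x₀ + u • v‖)
            (ψ' ‖x₀ + t • v‖ * (⟪x₀ + t • v, v⟫ / ‖x₀ + t • v‖)) t :=
          (hψat _ hnlt).comp t (hasDerivAt_norm_line hn0)
        have h3 : HasDerivAt (fun u : ℝ => den (x₀ + u • v))
            (ψ' ‖x₀ + t • v‖ * (⟪x₀ + t • v, v⟫ / ‖x₀ + t • v‖)) t := by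
          rw [hden]
          exact h2.add_const ε
        have h4 := h1.sub (h3.const_mul S)
        rw [hz, hg'def]
        exact h4
      have hC : HasDerivAt g'
          (iteratedFDeriv ℝ 2 φ x₀ ![v, v]
            - S * (ψ'' r * (c / r) * (c / r) + ψ' r * ((1 * r - c * (c / r)) / r ^ 2))) 0 := by
        have hA : HasDerivAt (fun t : ℝ => fderiv ℝ φ (x₀ + t • v) v)
            (iteratedFDeriv ℝ 2 φ x₀ ![v, v]) 0 :=
          line_second_deriv (hφ2.contDiffAt (hΩopen.mem_nhds hx₀in))
        have hN0 : ‖x₀ + (0:ℝ) • v‖ = r := by rw [hx00]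
        have hN : HasDerivAt (fun t : ℝ => ‖x₀ + t • v‖) (c / r) 0 := by
          have h := hasDerivAt_norm_line (x := x₀) (v := v) (t := 0)
            (by rw [hx00]; exact hx₀0)
          rw [hx00] at h
          exact h
        have hu₁ : HasDerivAt (fun t : ℝ => ψ' ‖x₀ + t • v‖) (ψ'' r * (c / r)) 0 := by
          have hψ'r := hψ'at r hrmem
          rw [← hN0] at hψ'r
          have h := hψ'r.comp 0 hN
          rw [hN0] at h
          simpa [Function.comp_def] using h
        have hP : HasDerivAt (fun t : ℝ => ⟪x₀ + t • v, v⟫) 1 0 := by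
          have h : HasDerivAt (fun t : ℝ => c + t) 1 0 := by
            simpa using (hasDerivAt_id (0:ℝ)).const_add c
          exact h.congr_of_eventuallyEq (Filter.Eventually.of_forall (fun t => (hPt t)))
        have hu₂ : HasDerivAt (fun t : ℝ => ⟪x₀ + t • v, v⟫ / ‖x₀ + t • v‖)
            ((1 * r - c * (c / r)) / r ^ 2) 0 := by
          have h := hP.div hN (by rw [hN0]; exact hrne)
          rw [hN0] at h
          rw [show (⟪x₀ + (0:ℝ) • v, v⟫ : ℝ) = c by rw [hx00]] at h
          exact h
        have h := hA.sub ((hu₁.mul hu₂).const_mul S)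
        simp only [hx00] at h
        rw [hg'def]
        rw [← hcdef, ← hrdef] at h
        exact h
      have htest := second_deriv_test (hsopen.mem_nhds hs0) hg hC (hlinemax v)
      rw [sub_nonpos] at htest
      exact htest
    -- sum over the directions
    have hsumc : ∑ i : Fin n, (⟪x₀, (EuclideanSpace.single i 1 : Euc n)⟫ : ℝ) ^ 2 = r ^ 2 := by
      have h1 : ∀ i : Fin n, (⟪x₀, (EuclideanSpace.single i 1 : Euc n)⟫ : ℝ) = x₀ i := by
        intro i
        rw [real_inner_comm]
        exact EuclideanSpace.inner_single_left i 1 x₀ |>.trans (by simp)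
      calc ∑ i : Fin n, (⟪x₀, (EuclideanSpace.single i 1 : Euc n)⟫ : ℝ) ^ 2
          = ∑ i : Fin n, (x₀ i) ^ 2 := by
            apply Finset.sum_congr rfl
            intro i _
            rw [h1 i]
        _ = r ^ 2 := by
            rw [hrdef, EuclideanSpace.norm_eq]
            rw [Real.sq_sqrt (by positivity)]
            apply Finset.sum_congr rfl
            intro i _
            rw [Real.norm_eq_abs, sq_abs]
    have hlapbd : lap φ x₀ ≤ S * (ψ'' r + ψ' r * ((n - 1) / r)) := by
      have h1 : lap φ x₀ ≤ ∑ i : Fin n,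
          S * (ψ'' r * (⟪x₀, (EuclideanSpace.single i 1 : Euc n)⟫ / r) * (⟪x₀, (EuclideanSpace.single i 1 : Euc n)⟫ / r)
            + ψ' r * ((1 * r - ⟪x₀, (EuclideanSpace.single i 1 : Euc n)⟫ * (⟪x₀, (EuclideanSpace.single i 1 : Euc n)⟫ / r)) / r ^ 2)) := by
        rw [lap]
        exact Finset.sum_le_sum (fun i _ => hkey i)
      refine h1.trans (le_of_eq ?_)
      have h2 : ∀ i : Fin n,
          S * (ψ'' r * (⟪x₀, (EuclideanSpace.single i 1 : Euc n)⟫ / r) * (⟪x₀, (EuclideanSpace.single i 1 : Euc n)⟫ / r)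
            + ψ' r * ((1 * r - ⟪x₀, (EuclideanSpace.single i 1 : Euc n)⟫ * (⟪x₀, (EuclideanSpace.single i 1 : Euc n)⟫ / r)) / r ^ 2))
          = (S * (ψ'' r / r ^ 2 - ψ' r / r ^ 3)) * (⟪x₀, (EuclideanSpace.single i 1 : Euc n)⟫ : ℝ) ^ 2
            + S * (ψ' r / r) := by
        intro i
        field_simp
        ring
      rw [Finset.sum_congr rfl (fun i _ => h2 i), Finset.sum_add_distrib, ← Finset.mul_sum,
        hsumc, Finset.sum_const, Finset.card_univ, Fintype.card_fin, nsmul_eq_mul]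
      field_simp
      ring
    -- put everything together
    have hpde₀ := hpde x₀ ⟨hx₀in, hx₀0⟩
    rw [hinner] at hpde₀
    have heqr := heq r ⟨hrpos.le, hrR.le⟩
    have hφx₀ : φ x₀ = S * (ψ r + ε) := by
      rw [hx₀eq, hden]
    have hψrpos : 0 ≤ ψ r := hψnonneg r ⟨hrpos.le, hrR.le⟩
    have hc₀r : c₀ * r ≤ -ψ' r := hc₀ r ⟨hrpos, hrR.le⟩
    have hlam : lam * φ x₀ ≤ μ * (S * (ψ r + ε)) := by
      rw [hφx₀]
      apply mul_le_mul_of_nonneg_right hcon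
      positivity
    -- lam * φ x₀ = -lap φ x₀ + τ * (S * ψ' r) ≥ S * (μ ψ r + (n-1) c₀)
    have hlow : S * (μ * ψ r + ((n:ℝ) - 1) * c₀) ≤ lam * φ x₀ := by
      rw [← hpde₀]
      have h3 : -ψ' r / r ≥ c₀ := by
        rw [ge_iff_le, le_div_iff₀ hrpos]
        linarith
      have h4 : S * (ψ'' r + ψ' r * (((n:ℝ) - 1) / r)) ≥ lap φ x₀ := by
        exact_mod_cast hlapbd
      have h5 : ψ'' r = τ * ψ' r - μ * ψ r := by linarith
      have h6 : ψ' r * (((n:ℝ) - 1) / r) ≤ -(((n:ℝ) - 1) * c₀) := by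
        have h7 : ψ' r / r ≤ -c₀ := by
          rw [div_le_iff₀ hrpos]
          nlinarith
        have h8 : ψ' r * (((n:ℝ) - 1) / r) = ((n:ℝ) - 1) * (ψ' r / r) := by ring
        rw [h8]
        nlinarith
      nlinarith
    have hfin := le_trans hlow hlam
    nlinarith [hfin, mul_pos hSpos (sub_pos.mpr hεc₀)]
end
end
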